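/- arXiv:1108.3626 — 6 statements merged into one kernel-verified Lean document; each statement's English description precedes it below -/
import Mathlib

section
/- For every finite alphabet A, the regular language L = ⋃_{a ∈ A} (aa)^+ (all nonempty even-length powers of a single letter) is not (2·|A| − 1, k)-homomorphic for any k ≥ 2; that is, L is not the letterwise homomorphic image of any k-slt language over an alphabet of cardinality 2·|A| − 1. -/
/-- `L` is `k`-strictly locally testable, as defined by the sets `I` (allowed
prefixes of length `k-1`), `T` (allowed suffixes of length `k-1`) and `F`
(allowed factors of length `k`): membership of words of length `< k` is
unconstrained. -/
def IsSLTWith {B : Type} (k : ℕ) (I T F : Set (List B)) (L : Set (List B)) : Prop :=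
  (∀ w ∈ I, w.length = k - 1) ∧ (∀ w ∈ T, w.length = k - 1) ∧ (∀ w ∈ F, w.length = k) ∧
  ∀ x : List B, k ≤ x.length →
    (x ∈ L ↔ x.take (k - 1) ∈ I ∧ x.drop (x.length - (k - 1)) ∈ T ∧
      ∀ y : List B, y.length = k → y <:+: x → y ∈ F)

/-- `L` is `k`-strictly locally testable. -/
def IsSLT {B : Type} (k : ℕ) (L : Set (List B)) : Prop :=
  ∃ I T F, IsSLTWith k I T F L

/-- `L ⊆ A⁺` is `(m,k)`-homomorphic: it is the letterwise homomorphic image of a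
`k`-slt language `L' ⊆ B⁺` over an alphabet `B` of cardinality `m`. -/
def IsHomomorphic {A : Type} (m k : ℕ) (L : Set (List A)) : Prop :=
  ∃ (B : Type) (instB : Fintype B) (L' : Set (List B)) (π : B → A),
    @Fintype.card B instB = m ∧ IsSLT k L' ∧ [] ∉ L' ∧ L = (List.map π) '' L'

/-!
A `k`-slt language over `B` either contains all powers `b ^ n` with `n ≥ k` or none of
them: their prefixes and suffixes of length `k - 1` are `b ^ (k - 1)` and their factors of
length `k` are `b ^ k`. Since `|B| = 2|A| - 1 < 2|A|`, by pigeonhole some letter `a` has a single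
preimage `b`, so `a ^ n ∈ π(L')` iff `b ^ n ∈ L'`. Then `a ^ (2k) ∈ L` forces `a ^ (2k+1) ∈ L`,
an odd power.
-/

namespace IsSLTWith

variable {B : Type} {k : ℕ} {I T F L : Set (List B)}

theorem replicate_mem_of_replicate_mem (hL : IsSLTWith k I T F L) {m n : ℕ} {b : B}
    (hm : k ≤ m) (hn : k ≤ n) (h : List.replicate m b ∈ L) : List.replicate n b ∈ L := by
  obtain ⟨-, -, -, htest⟩ := hL
  obtain ⟨hprefix, hsuffix, hfactors⟩ := (htest _ (by simpa using hm)).mp h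
  have hfactor : List.replicate k b ∈ F :=
    hfactors _ List.length_replicate
      (by simpa [List.take_replicate, min_eq_left hm] using
        (List.take_prefix k (List.replicate m b)).isInfix)
  refine (htest _ (by simpa using hn)).mpr ⟨?_, ?_, fun y hy hyx => ?_⟩
  · rw [List.take_replicate] at hprefix ⊢
    rwa [min_eq_left (by omega)] at hprefix ⊢
  · rw [List.length_replicate, List.drop_replicate] at hsuffix ⊢
    rwa [Nat.sub_sub_self (by omega)] at hsuffix ⊢
  · rwa [List.eq_replicate_iff.mpr ⟨hy, fun c hc => List.eq_of_mem_replicate (hyx.subset hc)⟩]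

end IsSLTWith

theorem IsSLT.replicate_mem_of_replicate_mem {B : Type} {k : ℕ} {L : Set (List B)}
    (hL : IsSLT k L) {m n : ℕ} {b : B} (hm : k ≤ m) (hn : k ≤ n)
    (h : List.replicate m b ∈ L) : List.replicate n b ∈ L := by
  obtain ⟨I, T, F, hL⟩ := hL
  exact hL.replicate_mem_of_replicate_mem hm hn h

theorem List.eq_replicate_of_map_eq_replicate {α β : Type} {f : α → β} {a : α} {b : β}
    (hf : ∀ c, f c = b → c = a) {w : List α} {n : ℕ} (h : w.map f = List.replicate n b) :
    w = List.replicate n a := by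
  refine List.eq_replicate_iff.mpr ⟨by simpa using congrArg List.length h, fun c hc => hf c ?_⟩
  exact List.eq_of_mem_replicate (h ▸ List.mem_map_of_mem hc)

theorem Fintype.exists_fiber_subsingleton_of_card_lt_two_mul {α β : Type} [Fintype α]
    [Fintype β] (f : α → β) (h : Fintype.card α < 2 * Fintype.card β) :
    ∃ b, ∀ c c', f c = b → f c' = b → c = c' := by
  classical
  obtain ⟨b, hb⟩ := Fintype.exists_card_fiber_lt_of_card_lt_mul (f := f) (n := 2) (by omega)
  exact ⟨b, fun c c' hc hc' =>
    Finset.card_le_one.mp (Nat.le_of_lt_succ hb) c (by simpa using hc) c' (by simpa using hc')⟩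

/-- For every (nonempty, finite) alphabet `A`, the language
`⋃_{a ∈ A} (aa)⁺` is not `(2|A| - 1, k)`-homomorphic for any `k ≥ 2`. -/
theorem not_homomorphic_of_small_alphabet {A : Type} [Fintype A] [Nonempty A] :
    ∀ k : ℕ, 2 ≤ k →
      ¬ IsHomomorphic (2 * Fintype.card A - 1) k
        {w : List A | ∃ a : A, ∃ j : ℕ, 1 ≤ j ∧ w = List.replicate (2 * j) a} := by
  rintro k hk ⟨B, instB, L', π, hcard, hslt, -, hL⟩
  obtain ⟨a, ha⟩ := Fintype.exists_fiber_subsingleton_of_card_lt_two_mul π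
    (by have := Fintype.card_pos (α := A); omega)
  have even_length : ∀ w ∈ (List.map π) '' L', Even w.length := by
    rw [← hL]
    rintro _ ⟨_, j, -, rfl⟩
    simp
  obtain ⟨w, -, hw⟩ : List.replicate (2 * 1) a ∈ (List.map π) '' L' := hL ▸ ⟨a, 1, le_rfl, rfl⟩
  obtain ⟨b, hbw⟩ :=
    List.exists_mem_of_length_pos (l := w) (by simp [← List.length_map (f := π), hw])
  have hb : π b = a := List.eq_of_mem_replicate (hw ▸ List.mem_map_of_mem hbw)
  have replicate_mem_iff (n : ℕ) :
      List.replicate n a ∈ (List.map π) '' L' ↔ List.replicate n b ∈ L' :=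
    ⟨fun ⟨w, hw, h⟩ => List.eq_replicate_of_map_eq_replicate (fun c hc => ha c b hc hb) h ▸ hw,
      fun h => ⟨_, h, by simp [hb]⟩⟩
  have heven : List.replicate (2 * k) b ∈ L' :=
    (replicate_mem_iff _).mp (hL ▸ ⟨a, k, by omega, rfl⟩)
  have hodd : List.replicate (2 * k + 1) b ∈ L' :=
    hslt.replicate_mem_of_replicate_mem (by omega) (by omega) heven
  have := even_length _ ((replicate_mem_iff _).mpr hodd)
  simp at this
end

section
/- For every finite alphabet A, the regular language L = ⋃_{a ∈ A} (aa)^+ (all nonempty even-length powers of a single letter) is not the letterwise homomorphic image of any k-locally testable language over an alphabet of cardinality 2·|A| − 1, for any k ≥ 2: for every alphabet B with |B| = 2·|A| − 1, every k ≥ 2, every k-locally testable L' ⊆ B^+, and every map π : B → A extended letterwise to words, π(L') ≠ L. -/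
/-!
By pigeonhole, `2|A| - 1` letters cannot cover every `a ∈ A` twice, so some `a` has at most one
preimage `b`. Then the only preimage of `a^{2k}` is `b^{2k}`, which must lie in `L'`. A
`k`-locally testable language cannot tell `b^{2k}` from `b^{2k+1}`, so `b^{2k+1} ∈ L'` as well,
and its image `a^{2k+1}` has odd length.
-/

open List

/-- `L'` is `k`-locally testable: membership of words of length `≥ k` depends
only on the prefix of length `k-1`, the suffix of length `k-1`, and the set of
factors of length `k`. -/
def IsLocallyTestable {B : Type} (k : ℕ) (L : Set (List B)) : Prop :=
  ∀ x y : List B, k ≤ x.length → k ≤ y.length →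
    x.take (k - 1) = y.take (k - 1) →
    x.drop (x.length - (k - 1)) = y.drop (y.length - (k - 1)) →
    (∀ w : List B, w.length = k → (w <:+: x ↔ w <:+: y)) →
    (x ∈ L ↔ y ∈ L)

theorem IsLocallyTestable.replicate_mem_iff {B : Type} {k : ℕ} {L : Set (List B)}
    (hL : IsLocallyTestable k L) (b : B) {m n : ℕ} (hm : k ≤ m) (hn : k ≤ n) :
    replicate m b ∈ L ↔ replicate n b ∈ L :=
  hL _ _ (by simpa using hm) (by simpa using hn)
    (by simp only [take_replicate]; congr 1; omega)
    (by simp only [length_replicate, drop_replicate]; congr 1; omega)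
    (fun w hw => by simp only [infix_replicate_iff, hw, hm, hn, true_and])

theorem exists_fiber_subsingleton_of_card_lt {A B : Type} [Fintype A] [Fintype B]
    (π : B → A) (h : Fintype.card B < 2 * Fintype.card A) :
    ∃ a, ∀ x y, π x = a → π y = a → x = y := by
  classical
  obtain ⟨a, ha⟩ := Fintype.exists_card_fiber_lt_of_card_lt_mul (f := π) (n := 2) (by omega)
  exact ⟨a, fun x y hx hy =>
    Finset.card_le_one.mp (Nat.le_of_lt_succ ha) x (by simpa) y (by simpa)⟩

theorem List.eq_replicate_of_map_eq_replicate_s2 {A B : Type} {π : B → A} {a : A} {b : B}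
    (hfib : ∀ x y, π x = a → π y = a → x = y) (hb : π b = a) {n : ℕ} {w : List B}
    (hw : w.map π = replicate n a) : w = replicate n b := by
  refine eq_replicate_iff.mpr ⟨by simpa using congrArg length hw, fun x hx => hfib x b ?_ hb⟩
  exact eq_of_mem_replicate (hw ▸ mem_map_of_mem hx)

/-- For every (nonempty, finite) alphabet `A`, the language
`⋃_{a ∈ A} (aa)⁺` is not the letterwise homomorphic image of any `k`-locally
testable language over an alphabet of cardinality `2|A| - 1`, for any `k ≥ 2`. -/
theorem not_image_of_locally_testable {A : Type} [Fintype A] [Nonempty A] :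
    ∀ (B : Type) (instB : Fintype B), @Fintype.card B instB = 2 * Fintype.card A - 1 →
      ∀ k : ℕ, 2 ≤ k → ∀ L' : Set (List B), IsLocallyTestable k L' → [] ∉ L' →
        ∀ π : B → A,
          (List.map π) '' L' ≠
            {w : List A | ∃ a : A, ∃ j : ℕ, 1 ≤ j ∧ w = List.replicate (2 * j) a} := by
  intro B instB hcard k _ L' hLT _ π himg
  have hA : 0 < Fintype.card A := Fintype.card_pos
  obtain ⟨a, hfib⟩ := exists_fiber_subsingleton_of_card_lt π (by omega)
  obtain ⟨w, hwL, hw⟩ : replicate (2 * k) a ∈ map π '' L' :=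
    himg ▸ ⟨a, k, by omega, rfl⟩
  obtain ⟨b, hbw⟩ : ∃ b, b ∈ w :=
    exists_mem_of_length_pos (by rw [← length_map (f := π), hw, length_replicate]; omega)
  have hb : π b = a := eq_of_mem_replicate (hw ▸ mem_map_of_mem hbw)
  rw [eq_replicate_of_map_eq_replicate_s2 hfib hb hw] at hwL
  have hodd : replicate (2 * k + 1) b ∈ L' :=
    (hLT.replicate_mem_iff b (by omega) (by omega)).mp hwL
  obtain ⟨_, j, -, hj⟩ : map π (replicate (2 * k + 1) b) ∈
      {w : List A | ∃ a : A, ∃ j : ℕ, 1 ≤ j ∧ w = List.replicate (2 * j) a} :=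
    himg ▸ ⟨_, hodd, rfl⟩
  have := congrArg length hj
  simp only [length_map, length_replicate] at this
  omega
end

section
/- Every regular language L ⊆ A^+ (not containing the empty word) over a finite alphabet A is (2·|A|, k)-homomorphic for some integer k ≥ 2: there exist an alphabet B of cardinality exactly 2·|A|, an integer k ≥ 2, a k-slt language L' ⊆ B^+, and a map π : B → A extended letterwise to words, with π(L') = L. -/
/-- A (nonempty) path of the NFA with transition relation `E`: a nonempty list of
transitions, all in `E`, which are pairwise consecutive. -/
def IsPath {Q A : Type} (E : Set (Q × A × Q)) (η : List (Q × A × Q)) : Prop :=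
  η ≠ [] ∧ (∀ e ∈ η, e ∈ E) ∧ List.Chain' (fun e f => e.2.2 = f.1) η

/-- The origin of a path (as an `Option`, `none` for the empty path). -/
def origState {Q A : Type} (η : List (Q × A × Q)) : Option Q := η.head?.map (fun e => e.1)

/-- The end of a path (as an `Option`, `none` for the empty path). -/
def endState {Q A : Type} (η : List (Q × A × Q)) : Option Q := η.getLast?.map (fun e => e.2.2)

/-- The label of a path. -/
def pathLabel {Q A : Type} (η : List (Q × A × Q)) : List A := η.map (fun e => e.2.1)

/-- The language of the NFA `(Q, A, E, q₀, F)`: labels of paths from `q₀` to a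
final state. -/
def nfaLang {Q A : Type} (E : Set (Q × A × Q)) (q0 : Q) (F : Set Q) : Set (List A) :=
  {w | ∃ η, IsPath E η ∧ origState η = some q0 ∧ (∃ q ∈ F, endState η = some q) ∧
    w = pathLabel η}

/-- The transition relation `E` is total. -/
def TotalRel {Q A : Type} (E : Set (Q × A × Q)) : Prop := ∀ q a, ∃ p, (q, a, p) ∈ E

/-- `L` is regular: it is recognized by some nondeterministic finite automaton. -/
def RegularLang {A : Type} (L : Set (List A)) : Prop :=
  ∃ (Q : Type) (E : Set (Q × A × Q)) (q0 : Q) (F : Set Q),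
    Finite Q ∧ q0 ∉ F ∧ L = nfaLang E q0 F

/-!
Attach one bit to each letter of a word to record an accepting run of the automaton, with states
indexed by `Fin n`: cut the positions into blocks of length `t = 2n + 1`, and inside a block whose
initial state has index `s` put a `1` exactly at offsets `0` and `s + 1`. Offsets `n + 1, …, 2n`
always carry `0`, so a `1` preceded by `n` zeros can only be a block start, and the `n` bits after
it name the state there. Hence a factor of length `4t` of a word over `A × Bool` that occurs in
some encoded accepting run determines, at the block starts it covers, the state of that run, and
the runs read off overlapping factors glue block by block. So the projection to `A` of the
`4t`-strictly locally testable closure of the encoded accepting runs is the language itself.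
-/

namespace StrictlyLocal

section Closure

variable {B : Type}

def sltClosure (k : ℕ) (S : Set (List B)) : Set (List B) :=
  {x | x.length < k ∧ x ∈ S ∨
    k ≤ x.length ∧ (∃ z ∈ S, k ≤ z.length ∧ z.take (k - 1) = x.take (k - 1)) ∧
      (∃ z ∈ S, k ≤ z.length ∧
        z.drop (z.length - (k - 1)) = x.drop (x.length - (k - 1))) ∧
      ∀ y : List B, y.length = k → y <:+: x → ∃ z ∈ S, y <:+: z}

theorem isSLT_sltClosure (k : ℕ) (S : Set (List B)) : IsSLT k (sltClosure k S) := by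
  let long := {z ∈ S | k ≤ z.length}
  refine ⟨(·.take (k - 1)) '' long, (fun z => z.drop (z.length - (k - 1))) '' long,
    {y | y.length = k ∧ ∃ z ∈ S, y <:+: z}, ?_, ?_, fun y hy => hy.1, fun x hx => ?_⟩
  · rintro _ ⟨z, ⟨-, hz⟩, rfl⟩
    simp only [List.length_take]
    omega
  · rintro _ ⟨z, ⟨-, hz⟩, rfl⟩
    simp only [List.length_drop]
    omega
  · simp only [sltClosure, Set.mem_ofPred_eq, Set.mem_image, long, not_lt.2 hx, false_and,
      false_or, and_assoc]
    exact ⟨fun h => ⟨h.2.1, h.2.2.1, fun y hy hyx => ⟨hy, h.2.2.2 y hy hyx⟩⟩,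
      fun h => ⟨hx, h.1, h.2.1, fun y hy hyx => (h.2.2 y hy hyx).2⟩⟩

theorem subset_sltClosure (k : ℕ) (S : Set (List B)) : S ⊆ sltClosure k S := by
  intro x hx
  by_cases hk : x.length < k
  · exact Or.inl ⟨hk, hx⟩
  · exact Or.inr ⟨not_lt.1 hk, ⟨x, hx, not_lt.1 hk, rfl⟩, ⟨x, hx, not_lt.1 hk, rfl⟩,
      fun y _ hy => ⟨x, hx, hy⟩⟩

end Closure

section Agreement

variable {α β : Type*}

def AgreeOn (x : List α) (p : ℕ) (z : List α) (d l : ℕ) : Prop :=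
  ∀ i < l, x[p + i]? = z[d + i]?

theorem AgreeOn.symm {x z : List α} {p d l : ℕ} (h : AgreeOn x p z d l) : AgreeOn z d x p l :=
  fun i hi => (h i hi).symm

theorem AgreeOn.map {x z : List α} {p d l : ℕ} (f : α → β) (h : AgreeOn x p z d l) :
    AgreeOn (x.map f) p (z.map f) d l := by
  intro i hi
  simp only [List.getElem?_map, h i hi]

theorem agreeOn_of_take_eq {x z : List α} {l : ℕ} (h : x.take l = z.take l) :
    AgreeOn x 0 z 0 l := by
  intro i hi
  simpa [List.getElem?_take, hi] using congrArg (·[i]?) h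

theorem agreeOn_of_drop_eq {x z : List α} {l : ℕ}
    (h : x.drop (x.length - l) = z.drop (z.length - l)) :
    AgreeOn x (x.length - l) z (z.length - l) l := by
  intro i _
  simpa [List.getElem?_drop] using congrArg (·[i]?) h

theorem exists_agreeOn_of_infix {x z : List α} {p l : ℕ} (hl : p + l ≤ x.length)
    (h : (x.drop p).take l <:+: z) : ∃ d, d + l ≤ z.length ∧ AgreeOn x p z d l := by
  obtain ⟨d, hd, hget⟩ := List.infix_iff_getElem?.1 h
  have hlen : ((x.drop p).take l).length = l := by
    simp only [List.length_take, List.length_drop]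
    omega
  refine ⟨d, by omega, fun i hi => ?_⟩
  rw [add_comm d, hget i (by omega)]
  simp

end Agreement

section Runs

variable {Q A : Type} (E : Set (Q × A × Q)) (q0 : Q)

def IsRunOn (w : List A) (σ : ℕ → Q) (a b : ℕ) : Prop :=
  ∀ i, a ≤ i → i < b → ∀ c, w[i]? = some c → (σ i, c, σ (i + 1)) ∈ E

def Reaches (w : List A) (c : ℕ) (q : Q) : Prop :=
  ∃ σ : ℕ → Q, σ 0 = q0 ∧ σ c = q ∧ IsRunOn E w σ 0 c

variable {E q0} {w : List A} {σ τ : ℕ → Q}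

theorem IsRunOn.restrict (h : IsRunOn E w σ 0 w.length) (a b : ℕ) : IsRunOn E w σ a b :=
  fun i _ _ c hc => h i (Nat.zero_le i) (List.getElem?_eq_some_iff.1 hc).1 c hc

theorem IsRunOn.of_agreeOn {w' : List A} {p d l a b : ℕ} (h : AgreeOn w p w' d l)
    (hrun : IsRunOn E w σ (p + a) (p + b)) (hbl : b ≤ l) :
    IsRunOn E w' (fun i => σ (i + p - d)) (d + a) (d + b) := by
  intro i hai hib c hc
  show (σ (i + p - d), c, σ (i + 1 + p - d)) ∈ E
  have hstep := hrun (i + p - d) (by omega) (by omega) c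
    (by rw [show i + p - d = p + (i - d) by omega, h _ (by omega),
      show d + (i - d) = i by omega, hc])
  rwa [show i + 1 + p - d = i + p - d + 1 by omega]

theorem reaches_zero : Reaches E q0 w 0 q0 :=
  ⟨fun _ => q0, rfl, rfl, fun _ _ h => absurd h (Nat.not_lt_zero _)⟩

theorem Reaches.trans_isRunOn {a b : ℕ} {q : Q} (h : Reaches E q0 w a q)
    (hτ : IsRunOn E w τ a b) (hq : τ a = q) (hab : a ≤ b) : Reaches E q0 w b (τ b) := by
  obtain ⟨σ, hσ0, hσa, hσ⟩ := h
  refine ⟨fun i => if i ≤ a then σ i else τ i, ?_, ?_, fun i _ hib c hc => ?_⟩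
  · simp [hσ0]
  · rcases hab.eq_or_lt with rfl | hlt
    · simp [hσa, hq]
    · simp [Nat.not_le.2 hlt]
  · by_cases hia : i < a
    · simpa [hia.le, Nat.succ_le_of_lt hia] using hσ i (Nat.zero_le i) hia c hc
    · rcases (Nat.not_lt.1 hia).eq_or_lt with hai | hlt
      · subst hai
        simpa [hσa, hq] using hτ a le_rfl hib c hc
      · simpa [Nat.not_le.2 hlt, Nat.not_le.2 (Nat.lt_succ_of_lt hlt)] using
          hτ i hlt.le hib c hc

theorem mem_nfaLang_iff {F : Set Q} :
    w ∈ nfaLang E q0 F ↔ w ≠ [] ∧ ∃ q ∈ F, Reaches E q0 w w.length q := by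
  constructor
  · rintro ⟨η, ⟨hne, hE, hchain⟩, horig, ⟨qf, hqf, hend⟩, rfl⟩
    have hpos : 0 < η.length := List.length_pos_iff.2 hne
    have hlen : (pathLabel η).length = η.length := List.length_map _
    refine ⟨by simpa [pathLabel] using hne, qf, hqf,
      fun i => if h : i < η.length then η[i].1 else qf, ?_, by simp [hlen], ?_⟩
    · simpa [origState, List.head?_eq_getElem?, hpos] using horig
    · intro i _ hi c hc
      rw [hlen] at hi
      obtain rfl : η[i].2.1 = c := by simpa [pathLabel, hi] using hc
      have hnext : (if h : i + 1 < η.length then η[i + 1].1 else qf) = η[i].2.2 := by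
        split_ifs with h
        · exact (List.isChain_iff_getElem.1 hchain i h).symm
        · obtain rfl : i = η.length - 1 := by omega
          simpa [endState, List.getLast?_eq_getElem?, hpos] using hend.symm
      simpa [hi, hnext] using hE _ (List.getElem_mem hi)
  · rintro ⟨hne, qf, hqf, σ, hσ0, hσf, hrun⟩
    have hstep : ∀ i (hi : i < w.length), (σ i, w[i], σ (i + 1)) ∈ E :=
      fun i hi => hrun i (Nat.zero_le i) hi _ (List.getElem?_eq_getElem hi)
    have hpos : 0 < w.length := List.length_pos_iff.2 hne
    refine ⟨w.mapIdx fun i a => (σ i, a, σ (i + 1)), ⟨by simpa using hne, ?_, ?_⟩, ?_,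
      ⟨qf, hqf, ?_⟩, ?_⟩
    · intro e he
      obtain ⟨i, hi, rfl⟩ := List.mem_iff_getElem.1 he
      simpa using hstep i (by simpa using hi)
    · exact List.isChain_iff_getElem.2 fun i _ => by simp
    · simp [origState, List.head?_eq_getElem?, hpos, hσ0]
    · simp [endState, List.getLast?_eq_getElem?, hpos,
        Nat.sub_add_cancel hpos, hσf]
    · refine List.ext_getElem? fun i => ?_
      simp [pathLabel, List.getElem?_mapIdx, Function.comp_def]

end Runs

section Markers

def markBit (t : ℕ) (f : ℕ → ℕ) (i : ℕ) : Bool :=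
  decide (i % t = 0 ∨ i % t = f (i - i % t) + 1)

def encode {A : Type} (t : ℕ) (f : ℕ → ℕ) (w : List A) : List (A × Bool) :=
  w.mapIdx fun i a => (a, markBit t f i)

def IsMarkerAt (n : ℕ) (bs : List Bool) (c s : ℕ) : Prop :=
  (∀ u ≤ n, bs[c + u]? = some (decide (u = 0 ∨ u = s + 1))) ∧
    ∀ u, 1 ≤ u → u ≤ n → bs[c - u]? = some false

variable {A : Type} {n t D u : ℕ} {f : ℕ → ℕ}

theorem markBit_add (hD : D % t = 0) (hut : u < t) :
    markBit t f (D + u) = decide (u = 0 ∨ u = f D + 1) := by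
  obtain ⟨a, rfl⟩ := Nat.dvd_of_mod_eq_zero hD
  have hmod : (t * a + u) % t = u := by
    rw [Nat.mul_comm]
    exact Nat.mul_add_mod_of_lt hut
  simp [markBit, hmod]

theorem markBit_sub_eq_false (hf : ∀ i, f i < n) (ht : 2 * n < t) (hD : D % t = 0)
    (htD : t ≤ D) (hu : 1 ≤ u) (hun : u ≤ n) : markBit t f (D - u) = false := by
  have hDt : (D - t) % t = 0 := Nat.sub_mod_eq_zero_of_mod_eq (by rw [hD, Nat.mod_self])
  have := hf (D - t)
  rw [show D - u = D - t + (t - u) by omega, markBit_add hDt (by omega)]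
  simp only [decide_eq_false_iff_not]
  omega

theorem mod_eq_zero_of_markBit (hf : ∀ i, f i < n) (h : markBit t f D = true)
    (hzero : ∀ u, 1 ≤ u → u ≤ n → markBit t f (D - u) = false) : D % t = 0 := by
  by_contra hr
  have hD : D % t = f (D - D % t) + 1 := by simpa [markBit, hr] using h
  have := hf (D - D % t)
  have hstart : (D - D % t) % t = 0 := Nat.sub_mod_eq_zero_of_mod_eq (Nat.mod_mod D t).symm
  simpa [markBit, hstart] using hzero (D % t) (by omega) (by omega)

theorem map_fst_encode (t : ℕ) (f : ℕ → ℕ) (w : List A) : (encode t f w).map Prod.fst = w :=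
  List.ext_getElem? fun i => by simp [encode, List.getElem?_mapIdx, Function.comp_def]

theorem length_encode (t : ℕ) (f : ℕ → ℕ) (w : List A) : (encode t f w).length = w.length :=
  List.length_mapIdx

theorem getElem?_map_snd_encode_eq_some {w : List A} {i : ℕ} {b : Bool} :
    ((encode t f w).map Prod.snd)[i]? = some b ↔ i < w.length ∧ markBit t f i = b := by
  simp [encode, List.getElem?_mapIdx, ← Option.isSome_iff_exists]

theorem isMarkerAt_encode {w : List A} (hf : ∀ i, f i < n) (ht : 2 * n < t) (hD : D % t = 0)
    (htD : t ≤ D) (hDw : D + n < w.length) :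
    IsMarkerAt n ((encode t f w).map Prod.snd) D (f D) :=
  ⟨fun u hu => getElem?_map_snd_encode_eq_some.2 ⟨by omega, markBit_add hD (by omega)⟩,
    fun u hu hun => getElem?_map_snd_encode_eq_some.2
      ⟨by omega, markBit_sub_eq_false hf ht hD htD hu hun⟩⟩

theorem IsMarkerAt.mod_eq_zero_and_eq_of_encode {w : List A} {s : ℕ} (hf : ∀ i, f i < n)
    (ht : 2 * n < t)
    (h : IsMarkerAt n ((encode t f w).map Prod.snd) D s) : D % t = 0 ∧ f D = s := by
  have hbit : ∀ u ≤ n, markBit t f (D + u) = decide (u = 0 ∨ u = s + 1) :=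
    fun u hu => (getElem?_map_snd_encode_eq_some.1 (h.1 u hu)).2
  have hD : D % t = 0 := mod_eq_zero_of_markBit hf (by simpa using hbit 0 (Nat.zero_le n))
    fun u hu hun => (getElem?_map_snd_encode_eq_some.1 (h.2 u hu hun)).2
  have hfD := hbit (f D + 1) (hf D)
  rw [markBit_add hD (by have := hf D; omega)] at hfD
  exact ⟨hD, by simpa using hfD⟩

theorem IsMarkerAt.of_agreeOn {bs bs' : List Bool} {p d l a s : ℕ} (h : AgreeOn bs p bs' d l)
    (ha : n ≤ a) (hal : a + n < l) (hm : IsMarkerAt n bs (p + a) s) :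
    IsMarkerAt n bs' (d + a) s := by
  refine ⟨fun u hu => ?_, fun u hu hun => ?_⟩
  · rw [show d + a + u = d + (a + u) by omega, ← h _ (by omega), ← add_assoc]
    exact hm.1 u hu
  · rw [show d + a - u = d + (a - u) by omega, ← h _ (by omega),
      show p + (a - u) = p + a - u by omega]
    exact hm.2 u hu hun

end Markers

section Gluing

variable {Q A : Type} {n : ℕ}

def encodedRuns (E : Set (Q × A × Q)) (q0 : Q) (F : Set Q) (t : ℕ) (e : Q ↪ Fin n) :
    Set (List (A × Bool)) :=
  {z | ∃ (w : List A) (σ : ℕ → Q), σ 0 = q0 ∧ σ w.length ∈ F ∧ IsRunOn E w σ 0 w.length ∧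
    z = encode t (fun i => e (σ i)) w}

variable {E : Set (Q × A × Q)} {q0 : Q} {F : Set Q} {t : ℕ} (e : Q ↪ Fin n)

theorem exists_mem_encodedRuns_of_mem_nfaLang {w : List A} (hw : w ∈ nfaLang E q0 F) :
    ∃ z ∈ encodedRuns E q0 F t e, z.map Prod.fst = w := by
  obtain ⟨-, q, hq, σ, hσ0, rfl, hrun⟩ := mem_nfaLang_iff.1 hw
  exact ⟨_, ⟨w, σ, hσ0, hq, hrun, rfl⟩, map_fst_encode _ _ _⟩

theorem map_fst_mem_nfaLang_of_mem_encodedRuns (hq0 : q0 ∉ F) {z : List (A × Bool)}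
    (hz : z ∈ encodedRuns E q0 F t e) : z.map Prod.fst ∈ nfaLang E q0 F := by
  obtain ⟨w, σ, hσ0, hσF, hrun, rfl⟩ := hz
  rw [map_fst_encode]
  refine mem_nfaLang_iff.2 ⟨?_, _, hσF, σ, hσ0, rfl, hrun⟩
  rintro rfl
  exact hq0 (hσ0 ▸ hσF)

theorem reaches_of_agreeOn_encode {x : List (A × Bool)} {w : List A} {σ : ℕ → Q}
    {p d l a b : ℕ} {q : Q} (ht : 2 * n < t) (hrun : IsRunOn E w σ 0 w.length)
    (hagree : AgreeOn x p (encode t (fun i => e (σ i)) w) d l)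
    (ha : n ≤ a) (hal : a + n < l) (hab : a ≤ b) (hbl : b ≤ l)
    (hmark : IsMarkerAt n (x.map Prod.snd) (p + a) (e q))
    (hreach : Reaches E q0 (x.map Prod.fst) (p + a) q) :
    (d + a) % t = 0 ∧ Reaches E q0 (x.map Prod.fst) (p + b) (σ (d + b)) := by
  -- The marker at `p + a` is copied into the encoded run, where it can only sit at a block start
  -- carrying the state `q`; from there the run is copied back onto `x`.
  have hmark' := hmark.of_agreeOn (hagree.map Prod.snd) ha hal
  obtain ⟨hmod, hidx⟩ := hmark'.mod_eq_zero_and_eq_of_encode (fun i => (e (σ i)).2) ht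
  have hσ : σ (d + a) = q := e.injective (Fin.ext hidx)
  have hrun' : IsRunOn E (x.map Prod.fst) (fun i => σ (i + d - p)) (p + a) (p + b) := by
    have := hrun.restrict (d + a) (d + b)
    rw [← map_fst_encode t (fun i => e (σ i)) w] at this
    exact this.of_agreeOn (hagree.symm.map Prod.fst) hbl
  refine ⟨hmod, ?_⟩
  have := hreach.trans_isRunOn hrun' (by simp [show p + a + d - p = d + a by omega, hσ])
    (by omega)
  simpa [show p + b + d - p = d + b by omega] using this

theorem exists_reaches_isMarkerAt_of_take_eq {x z : List (A × Bool)} (ht : 2 * n < t)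
    (hz : z ∈ encodedRuns E q0 F t e) (hzk : 4 * t ≤ z.length)
    (htake : z.take (4 * t - 1) = x.take (4 * t - 1)) :
    ∃ q, Reaches E q0 (x.map Prod.fst) t q ∧ IsMarkerAt n (x.map Prod.snd) t (e q) := by
  obtain ⟨w, σ, hσ0, -, hrun, rfl⟩ := hz
  have hagree := agreeOn_of_take_eq htake
  rw [length_encode] at hzk
  refine ⟨σ t, ?_, ?_⟩
  · have hrun' := IsRunOn.of_agreeOn (a := 0) (b := t) (hagree.map Prod.fst)
      (by simpa [map_fst_encode] using hrun.restrict 0 t) (by omega)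
    simpa using reaches_zero.trans_isRunOn hrun' (by simpa using hσ0) (Nat.zero_le _)
  · have hmark := isMarkerAt_encode (w := w) (fun i => (e (σ i)).2) ht (Nat.mod_self t) le_rfl
      (by omega)
    simpa using IsMarkerAt.of_agreeOn (a := t) (hagree.map Prod.snd) (by omega) (by omega)
      (by simpa using hmark)

theorem exists_reaches_isMarkerAt_add {x : List (A × Bool)} {c : ℕ} {q : Q} (ht : 2 * n < t)
    (hx : 4 * t ≤ x.length)
    (hfac : ∀ y : List (A × Bool), y.length = 4 * t → y <:+: x →
      ∃ z ∈ encodedRuns E q0 F t e, y <:+: z)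
    (hc : n ≤ c) (hcx : c + t + n < x.length)
    (hreach : Reaches E q0 (x.map Prod.fst) c q)
    (hmark : IsMarkerAt n (x.map Prod.snd) c (e q)) :
    ∃ q', Reaches E q0 (x.map Prod.fst) (c + t) q' ∧
      IsMarkerAt n (x.map Prod.snd) (c + t) (e q') := by
  -- The window of length `4t` ending just after the marker at `c + t`, or starting at `0` if that
  -- would start before `0`; it covers the `n` zeros before `c` in either case.
  set p := c + t + n + 1 - 4 * t
  obtain ⟨z, hz, hyz⟩ := hfac ((x.drop p).take (4 * t)) (by simp; omega)
    ((List.take_prefix _ _).isInfix.trans (List.drop_suffix p x).isInfix)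
  obtain ⟨d, hdz, hagree⟩ := exists_agreeOn_of_infix (by omega) hyz
  obtain ⟨w, σ, -, -, hrun, rfl⟩ := hz
  rw [length_encode] at hdz
  have hpc : p + (c - p) = c := by omega
  obtain ⟨hmod, hreach'⟩ := reaches_of_agreeOn_encode e ht hrun hagree (a := c - p)
    (b := c - p + t) (by omega) (by omega) (by omega) (by omega) (hpc ▸ hmark) (hpc ▸ hreach)
  have hpct : p + (c - p + t) = c + t := by omega
  refine ⟨σ (d + (c - p + t)), hpct ▸ hreach', ?_⟩
  have hmark' := isMarkerAt_encode (w := w) (D := d + (c - p + t)) (fun i => (e (σ i)).2) ht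
    (by rw [← add_assoc, Nat.add_mod_right, hmod]) (by omega) (by omega)
  exact hpct ▸ hmark'.of_agreeOn (hagree.symm.map Prod.snd) (by omega) (by omega)

theorem mem_nfaLang_of_drop_eq {x z : List (A × Bool)} {c : ℕ} {q : Q} (ht : 2 * n < t)
    (hz : z ∈ encodedRuns E q0 F t e) (hzk : 4 * t ≤ z.length) (hx : 4 * t ≤ x.length)
    (hdrop : z.drop (z.length - (4 * t - 1)) = x.drop (x.length - (4 * t - 1)))
    (hc : x.length ≤ c + t + n) (hcx : c + n < x.length)
    (hreach : Reaches E q0 (x.map Prod.fst) c q)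
    (hmark : IsMarkerAt n (x.map Prod.snd) c (e q)) :
    x.map Prod.fst ∈ nfaLang E q0 F := by
  obtain ⟨w, σ, -, hσF, hrun, rfl⟩ := hz
  have hagree := (agreeOn_of_drop_eq hdrop).symm
  rw [length_encode] at hzk hagree
  set p := x.length - (4 * t - 1)
  have hpc : p + (c - p) = c := by omega
  obtain ⟨-, hreach'⟩ := reaches_of_agreeOn_encode e ht hrun hagree (a := c - p)
    (b := 4 * t - 1) (by omega) (by omega) (by omega) le_rfl (hpc ▸ hmark) (hpc ▸ hreach)
  refine mem_nfaLang_iff.2 ⟨?_, _, hσF, ?_⟩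
  · exact List.ne_nil_of_length_pos (by simp only [List.length_map]; omega)
  · simpa [show p + (4 * t - 1) = x.length by omega,
      show w.length - (4 * t - 1) + (4 * t - 1) = w.length by omega] using hreach'

theorem map_fst_mem_nfaLang_of_mem_sltClosure (ht : 2 * n < t) (hq0 : q0 ∉ F)
    {x : List (A × Bool)} (hx : x ∈ sltClosure (4 * t) (encodedRuns E q0 F t e)) :
    x.map Prod.fst ∈ nfaLang E q0 F := by
  rcases hx with ⟨-, hx⟩ | ⟨hx, ⟨z₁, hz₁, hz₁k, htake⟩, ⟨z₂, hz₂, hz₂k, hdrop⟩, hfac⟩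
  · exact map_fst_mem_nfaLang_of_mem_encodedRuns e hq0 hx
  have hblocks : ∀ j, 1 ≤ j → j * t + n < x.length → ∃ q,
      Reaches E q0 (x.map Prod.fst) (j * t) q ∧ IsMarkerAt n (x.map Prod.snd) (j * t) (e q) := by
    intro j hj
    induction j, hj using Nat.le_induction with
    | base => simpa using fun _ => exists_reaches_isMarkerAt_of_take_eq e ht hz₁ hz₁k htake
    | succ j hj ih =>
      intro hjx
      rw [Nat.succ_mul] at hjx ⊢
      have htj : t ≤ j * t := Nat.le_mul_of_pos_left t hj
      obtain ⟨q, hq, hmark⟩ := ih (by omega)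
      exact exists_reaches_isMarkerAt_add e ht hx hfac (by omega) hjx hq hmark
  -- The last block start `J * t` whose marker fits inside `x` is `J = (x.length - n - 1) / t`.
  have ht0 : 0 < t := by omega
  have hJ : 1 ≤ (x.length - n - 1) / t := (Nat.le_div_iff_mul_le ht0).2 (by omega)
  have hlow := Nat.div_mul_le_self (x.length - n - 1) t
  have hhigh := Nat.lt_div_mul_add (a := x.length - n - 1) ht0
  obtain ⟨q, hq, hmark⟩ := hblocks _ hJ (by omega)
  exact mem_nfaLang_of_drop_eq e ht hz₂ hz₂k hx hdrop (by omega) (by omega) hq hmark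

end Gluing

end StrictlyLocal

open StrictlyLocal in
/-- Every regular language `L ⊆ A⁺` over a finite alphabet `A`
is `(2|A|, k)`-homomorphic for some `k ≥ 2`. -/
theorem regular_is_double_alphabet_homomorphic {A : Type} [Fintype A]
    (L : Set (List A)) (hL : RegularLang L) :
    ∃ k : ℕ, 2 ≤ k ∧ IsHomomorphic (2 * Fintype.card A) k L := by
  obtain ⟨Q, E, q0, F, hQ, hq0, rfl⟩ := hL
  have := Fintype.ofFinite Q
  set n := Fintype.card Q
  have ht : 2 * n < 2 * n + 1 := Nat.lt_succ_self _
  let e : Q ↪ Fin n := (Fintype.equivFin Q).toEmbedding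
  let S := encodedRuns E q0 F (2 * n + 1) e
  refine ⟨4 * (2 * n + 1), by omega, A × Bool, inferInstance, sltClosure (4 * (2 * n + 1)) S,
    Prod.fst, by simp [Nat.mul_comm], isSLT_sltClosure _ _, fun hnil => ?_, ?_⟩
  · exact (mem_nfaLang_iff.1 (map_fst_mem_nfaLang_of_mem_sltClosure e ht hq0 hnil)).1 rfl
  · refine Set.Subset.antisymm (fun w hw => ?_) ?_
    · obtain ⟨z, hz, rfl⟩ := exists_mem_encodedRuns_of_mem_nfaLang e hw
      exact ⟨z, subset_sltClosure _ _ hz, rfl⟩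
    · rintro _ ⟨x, hx, rfl⟩
      exact map_fst_mem_nfaLang_of_mem_sltClosure e ht hq0 hx
end

section
/- For all finite alphabets Q and D with n = |Q| ≥ 2 and h = |D| satisfying 2 ≤ h < n, there exists a factor-decodable code of Q into D of length m = ⌈g(h) + f(h)·log₂ n⌉, and this value of m satisfies m ≥ 3. -/
/-- A code of `Q` into `D` of length `m`: an injective map sending each state to
a word of length `m`. -/
def IsCode {Q D : Type} (m : ℕ) (c : Q → List D) : Prop :=
  Function.Injective c ∧ ∀ q, (c q).length = m

/-- A word `x ∈ D^{2m-1}` is factor-decodable: there is exactly one position `j`,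
`1 ≤ j ≤ m`, such that the factor of `x` of length `m` starting at position `j`
is a codeword. -/
def FactorDecodableWord {Q D : Type} (m : ℕ) (c : Q → List D) (x : List D) : Prop :=
  ∃! j : ℕ, 1 ≤ j ∧ j ≤ m ∧ ∃ q : Q, (x.drop (j - 1)).take m = c q

/-- The code `c` is factor-decodable: every factor of length `2m-1` of every
concatenation of codewords is factor-decodable. -/
def IsFactorDecodableCode {Q D : Type} (m : ℕ) (c : Q → List D) : Prop :=
  IsCode m c ∧
  ∀ l : List Q, l ≠ [] → ∀ x : List D, x.length = 2 * m - 1 →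
    x <:+: (l.map c).flatten → FactorDecodableWord m c x

/-- The function `f` of the paper. -/
noncomputable def fFun (h : ℝ) : ℝ :=
  (Real.logb 2 (h - 1 + Real.sqrt ((h - 1) * (h + 3))) - 1)⁻¹

/-- The function `g` of the paper. -/
noncomputable def gFun (h : ℝ) : ℝ :=
  1 + (fFun h / 2) * (Real.logb 2 (h - 1) + Real.logb 2 (h + 3))

/-!
Fix a letter `d` and take codewords `d d w` where `d :: w` has no factor `d d`. In a
concatenation of codewords a factor `d d x` with `x ≠ d` can then only start at a codeword
boundary, so in every factor of length `2m - 1` exactly one of the first `m` positions starts a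
codeword.

The number `s k` of admissible tails `w` of length `k` satisfies
`s (k + 2) = (h - 1) * (s (k + 1) + s k)`, so `s k * (λ - μ) = λ ^ (k + 1) - μ ^ (k + 1)` for
the roots `λ > 1 > |μ|` of `x ^ 2 = (h - 1) * (x + 1)`. Since `f h = 1 / log₂ λ` and
`g h = 1 + log₂ (λ - μ) / log₂ λ`, the choice of `m` gives `n * (λ - μ) ≤ λ ^ (m - 1)`, which
is less than `(s (m - 2) + 1) * (λ - μ)`; hence there are at least `n` codewords.
-/

namespace List

variable {α β : Type*}

theorem IsInfix.exists_eq_take_drop {x l : List α} (h : x <:+: l) :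
    ∃ p, x = (l.drop p).take x.length := by
  obtain ⟨s, hxs, hsl⟩ := infix_iff_prefix_suffix.mp h
  refine ⟨l.length - s.length, ?_⟩
  rw [← suffix_iff_eq_drop.mp hsl]
  exact prefix_iff_eq_take.mp hxs

theorem take_drop_take_drop {l : List α} {p a k L : ℕ} (h : a + k ≤ L) :
    (((l.drop p).take L).drop a).take k = (l.drop (p + a)).take k := by
  rw [drop_take, take_take, drop_drop, min_eq_left (by omega)]

variable {c : α → List β} {m : ℕ}

theorem drop_mul_flatten_map (hc : ∀ a, (c a).length = m) (l : List α) (i : ℕ) :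
    ((l.map c).flatten).drop (m * i) = ((l.drop i).map c).flatten := by
  induction l generalizing i with
  | nil => simp
  | cons a l ih =>
    cases i with
    | zero => simp
    | succ i =>
      rw [map_cons, flatten_cons, drop_append, hc, drop_eq_nil_of_le (by rw [hc]; nlinarith),
        show m * (i + 1) - m = m * i by rw [Nat.mul_succ, Nat.add_sub_cancel], ih]
      simp

theorem getElem?_flatten_map_mul_add (hc : ∀ a, (c a).length = m) (l : List α) (i : ℕ)
    {r : ℕ} (hr : r < m) :
    ((l.map c).flatten)[m * i + r]? = l[i]?.bind fun a => (c a)[r]? := by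
  rw [← getElem?_drop, drop_mul_flatten_map hc, ← head?_drop (l := l)]
  generalize l.drop i = l'
  cases l' with
  | nil => simp
  | cons a l => simp [getElem?_append_left (show r < (c a).length by rw [hc]; exact hr)]

end List

open List in
theorem isFactorDecodableCode_of_aligned {Q D : Type} {m : ℕ} {c : Q → List D} (hm : 0 < m)
    (hc : IsCode m c)
    (halign : ∀ (l : List Q) (t : ℕ) (q : Q), (((l.map c).flatten).drop t).take m = c q → m ∣ t) :
    IsFactorDecodableCode m c := by
  refine ⟨hc, fun l _ x hx hsub => ?_⟩
  set F := (l.map c).flatten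
  obtain ⟨p, hxp⟩ := hsub.exists_eq_take_drop
  have hwindow (j : ℕ) (hj : j ≤ m) :
      (x.drop (j - 1)).take m = (F.drop (p + (j - 1))).take m := by
    rw [hxp, hx]
    exact take_drop_take_drop (by omega)
  have hFlen : p + (2 * m - 1) ≤ F.length := by
    have := congrArg length hxp
    simp only [length_take, length_drop] at this
    omega
  obtain ⟨i, hi⟩ : ∃ i, p ≤ m * i ∧ m * i < p + m := by
    refine ⟨(p + m - 1) / m, ?_⟩
    have := Nat.div_add_mod (p + m - 1) m
    have := Nat.mod_lt (p + m - 1) hm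
    omega
  obtain ⟨q, hq⟩ : ∃ q, (F.drop (m * i)).take m = c q := by
    have hne : F.drop (m * i) ≠ [] := by
      rw [← length_pos_iff, length_drop]
      omega
    rw [drop_mul_flatten_map hc.2] at hne ⊢
    cases hl : l.drop i with
    | nil => simp [hl] at hne
    | cons q l' => exact ⟨q, by simp [take_left' (hc.2 q)]⟩
  refine ⟨m * i - p + 1, ⟨by omega, by omega, q, ?_⟩, ?_⟩
  · rw [hwindow _ (by omega), ← hq]
    congr 2
    omega
  rintro j ⟨hj1, hjm, q', hq'⟩
  rw [hwindow j hjm] at hq'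
  obtain ⟨k, hk⟩ := halign l _ _ hq'
  have hik : m * i < m * (k + 1) ∧ m * k < m * (i + 1) := by
    simp only [Nat.mul_succ]
    omega
  obtain rfl : i = k := by
    have := Nat.lt_of_mul_lt_mul_left hik.1
    have := Nat.lt_of_mul_lt_mul_left hik.2
    omega
  omega

section DoubleFree

variable {D : Type}

def DoubleFree (d : D) (l : List D) : Prop :=
  l.IsChain fun a b => a ≠ d ∨ b ≠ d

theorem DoubleFree.getElem?_succ_ne {d : D} {l : List D} (hl : DoubleFree d l) {k : ℕ}
    (hk : l[k]? = some d) : l[k + 1]? ≠ some d := by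
  intro hk'
  obtain ⟨_, hk⟩ := List.getElem?_eq_some_iff.mp hk
  obtain ⟨hlt, hk'⟩ := List.getElem?_eq_some_iff.mp hk'
  exact (hl.getElem k hlt).elim (· hk) (· hk')

theorem DoubleFree.cons_of_ne {d a : D} {w : List D} (ha : a ≠ d) (hw : DoubleFree d (d :: w)) :
    DoubleFree d (d :: a :: w) :=
  List.isChain_cons_cons.mpr ⟨Or.inr ha, hw.cons_of_imp fun _ _ => Or.inl ha⟩

end DoubleFree

section Marker

variable {Q D : Type}

open List in
theorem isFactorDecodableCode_cons_cons {m : ℕ} (hm : 3 ≤ m) (d : D) {w : Q → List D}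
    (hw : Function.Injective w) (hlen : ∀ q, (w q).length = m - 2)
    (hfree : ∀ q, DoubleFree d (d :: w q)) :
    IsFactorDecodableCode m fun q => d :: d :: w q := by
  have hc : IsCode m fun q => d :: d :: w q :=
    ⟨fun a b hab => hw (by simpa using hab), fun q => by simp only [length_cons, hlen]; omega⟩
  refine isFactorDecodableCode_of_aligned (by omega) hc fun l t q hq => ?_
  set F := (l.map fun q => d :: d :: w q).flatten
  have hF (k : ℕ) (hk : k < m) : F[t + k]? = (d :: d :: w q)[k]? := by
    rw [← getElem?_drop, ← getElem?_take_of_lt hk, hq]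
  have hFm := getElem?_flatten_map_mul_add hc.2 l
  obtain ⟨i, r, hr, rfl⟩ : ∃ i r, r < m ∧ t = m * i + r :=
    ⟨t / m, t % m, Nat.mod_lt t (by omega), (Nat.div_add_mod t m).symm⟩
  suffices r = 0 by simp [this]
  by_contra hr0
  rcases Nat.lt_or_ge (r + 1) m with hr1 | hr1
  · obtain ⟨s, rfl⟩ : ∃ s, r = s + 1 := ⟨r - 1, by omega⟩
    have h0 := hF 0 (by omega)
    have h1 := hF 1 (by omega)
    rw [add_zero, hFm i hr] at h0
    rw [add_assoc, hFm i hr1] at h1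
    obtain ⟨q', hq', hs⟩ := Option.bind_eq_some_iff.mp h0
    rw [hq', Option.bind_some] at h1
    exact (hfree q').getElem?_succ_ne hs h1
  · obtain ⟨y, hy⟩ : ∃ y, (w q)[0]? = some y :=
      Option.isSome_iff_exists.mp (by simp [hlen]; omega)
    have h2 := hF 2 (by omega)
    rw [show m * i + r + 2 = m * (i + 1) + 1 by rw [Nat.mul_succ]; omega, hFm _ (by omega)] at h2
    obtain ⟨q', _, hq'⟩ := Option.bind_eq_some_iff.mp (h2.trans (by simpa using hy))
    exact (hfree q).getElem?_succ_ne (k := 0) rfl (by simpa [← hq'] using hy)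

end Marker

section Counting

variable {D : Type} [DecidableEq D] [Fintype D]

open Finset

def doubleFreeTails (d : D) : ℕ → Finset (List D)
  | 0 => {[]}
  | 1 => (univ.erase d).image fun a => [a]
  | k + 2 => ((univ.erase d) ×ˢ doubleFreeTails d (k + 1)).image (fun p => p.1 :: p.2) ∪
      ((univ.erase d) ×ˢ doubleFreeTails d k).image fun p => p.1 :: d :: p.2

theorem length_eq_and_doubleFree_of_mem_doubleFreeTails {d : D} :
    ∀ {k : ℕ} {w : List D}, w ∈ doubleFreeTails d k → w.length = k ∧ DoubleFree d (d :: w)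
  | 0, w, hw => by
    rw [doubleFreeTails, mem_singleton] at hw
    simp [hw, DoubleFree]
  | 1, w, hw => by
    obtain ⟨a, ha, rfl⟩ := mem_image.mp hw
    simp_all [DoubleFree]
  | k + 2, w, hw => by
    rcases mem_union.mp hw with hw | hw <;> obtain ⟨⟨a, v⟩, hav, rfl⟩ := mem_image.mp hw <;>
      obtain ⟨ha, hv⟩ := mem_product.mp hav
    · obtain ⟨hlen, hfree⟩ := length_eq_and_doubleFree_of_mem_doubleFreeTails hv
      exact ⟨by simp [hlen], hfree.cons_of_ne (ne_of_mem_erase ha)⟩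
    · obtain ⟨hlen, hfree⟩ := length_eq_and_doubleFree_of_mem_doubleFreeTails hv
      have ha : a ≠ d := ne_of_mem_erase ha
      exact ⟨by simp [hlen], List.isChain_cons_cons.mpr
        ⟨Or.inr ha, List.isChain_cons_cons.mpr ⟨Or.inl ha, hfree⟩⟩⟩

theorem card_doubleFreeTails_zero (d : D) : #(doubleFreeTails d 0) = 1 := rfl

theorem card_doubleFreeTails_one (d : D) : #(doubleFreeTails d 1) = Fintype.card D - 1 := by
  rw [doubleFreeTails, card_image_of_injective _ fun a b h => List.singleton_inj.mp h,
    card_erase_of_mem (mem_univ d), card_univ]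

theorem card_doubleFreeTails_add_two (d : D) (k : ℕ) :
    #(doubleFreeTails d (k + 2)) =
      (Fintype.card D - 1) * (#(doubleFreeTails d (k + 1)) + #(doubleFreeTails d k)) := by
  have hdisj : Disjoint (((univ.erase d) ×ˢ doubleFreeTails d (k + 1)).image fun p => p.1 :: p.2)
      (((univ.erase d) ×ˢ doubleFreeTails d k).image fun p => p.1 :: d :: p.2) := by
    rw [disjoint_left]
    rintro _ h₁ h₂
    obtain ⟨⟨a, v⟩, hav, rfl⟩ := mem_image.mp h₁
    obtain ⟨⟨b, u⟩, -, h⟩ := mem_image.mp h₂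
    obtain ⟨-, rfl⟩ := List.cons_eq_cons.mp h
    have hv := (mem_product.mp hav).2
    have := (length_eq_and_doubleFree_of_mem_doubleFreeTails hv).2
    simp [DoubleFree] at this
  rw [doubleFreeTails, card_union_of_disjoint hdisj,
    card_image_of_injective _ fun p q h => by simpa [Prod.ext_iff] using h,
    card_image_of_injective _ fun p q h => by simpa [Prod.ext_iff] using h,
    card_product, card_product, card_erase_of_mem (mem_univ d), card_univ, mul_add]

end Counting

theorem mul_sub_eq_pow_sub_pow_of_recurrence {a b e : ℝ} (ha : a ^ 2 = e * (a + 1))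
    (hb : b ^ 2 = e * (b + 1)) {u : ℕ → ℝ} (h0 : u 0 = 1) (h1 : u 1 = e)
    (hrec : ∀ k, u (k + 2) = e * (u (k + 1) + u k)) (k : ℕ) :
    u k * (a - b) = a ^ (k + 1) - b ^ (k + 1) := by
  induction k using Nat.twoStepInduction with
  | zero => simp [h0]
  | one => rw [h1]; linear_combination hb - ha
  | more k ih₀ ih₁ =>
    rw [hrec]
    linear_combination e * ih₁ + e * ih₀ - a ^ (k + 1) * ha + b ^ (k + 1) * hb

section Roots

open Real

variable {h : ℝ}

noncomputable def sqrtDisc (h : ℝ) : ℝ := √((h - 1) * (h + 3))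

noncomputable def rootPlus (h : ℝ) : ℝ := (h - 1 + sqrtDisc h) / 2

noncomputable def rootMinus (h : ℝ) : ℝ := (h - 1 - sqrtDisc h) / 2

theorem sqrtDisc_sq (hh : 1 ≤ h) : sqrtDisc h ^ 2 = (h - 1) * (h + 3) :=
  sq_sqrt (by nlinarith)

theorem rootPlus_sq (hh : 1 ≤ h) : rootPlus h ^ 2 = (h - 1) * (rootPlus h + 1) := by
  unfold rootPlus; linear_combination sqrtDisc_sq hh / 4

theorem rootMinus_sq (hh : 1 ≤ h) : rootMinus h ^ 2 = (h - 1) * (rootMinus h + 1) := by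
  unfold rootMinus; linear_combination sqrtDisc_sq hh / 4

theorem rootPlus_sub_rootMinus (h : ℝ) : rootPlus h - rootMinus h = sqrtDisc h := by
  unfold rootPlus rootMinus; ring

theorem sub_one_lt_sqrtDisc (hh : 2 ≤ h) : h - 1 < sqrtDisc h :=
  lt_sqrt_of_sq_lt (by nlinarith)

theorem sqrtDisc_lt_add_one (hh : 2 ≤ h) : sqrtDisc h < h + 1 :=
  (sqrt_lt' (by linarith)).mpr (by nlinarith)

theorem one_lt_rootPlus (hh : 2 ≤ h) : 1 < rootPlus h := by
  unfold rootPlus; linarith [sub_one_lt_sqrtDisc hh]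

theorem rootPlus_lt_sqrtDisc (hh : 2 ≤ h) : rootPlus h < sqrtDisc h := by
  unfold rootPlus; linarith [sub_one_lt_sqrtDisc hh]

theorem abs_rootMinus_lt_one (hh : 2 ≤ h) : |rootMinus h| < 1 := by
  unfold rootMinus
  rw [abs_lt]
  constructor <;> linarith [sub_one_lt_sqrtDisc hh, sqrtDisc_lt_add_one hh]

theorem fFun_eq_inv_logb_rootPlus (hh : 2 ≤ h) : fFun h = (logb 2 (rootPlus h))⁻¹ := by
  have : 0 < rootPlus h := by linarith [one_lt_rootPlus hh]
  rw [fFun, show h - 1 + √((h - 1) * (h + 3)) = 2 * rootPlus h by unfold rootPlus sqrtDisc; ring,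
    logb_mul two_ne_zero this.ne', logb_self_eq_one one_lt_two, add_sub_cancel_left]

theorem gFun_eq_one_add_fFun_mul (hh : 2 ≤ h) : gFun h = 1 + fFun h * logb 2 (sqrtDisc h) := by
  rw [gFun, ← logb_mul (by linarith) (by linarith), ← sqrtDisc_sq (by linarith), logb_pow]
  push_cast
  ring

theorem fFun_pos (hh : 2 ≤ h) : 0 < fFun h := by
  rw [fFun_eq_inv_logb_rootPlus hh]
  exact inv_pos.mpr (logb_pos one_lt_two (one_lt_rootPlus hh))

theorem two_lt_gFun (hh : 2 ≤ h) : 2 < gFun h := by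
  have hlog := logb_pos one_lt_two (one_lt_rootPlus hh)
  have hlt : logb 2 (rootPlus h) < logb 2 (sqrtDisc h) :=
    logb_lt_logb one_lt_two (by linarith [one_lt_rootPlus hh]) (rootPlus_lt_sqrtDisc hh)
  rw [gFun_eq_one_add_fFun_mul hh, fFun_eq_inv_logb_rootPlus hh, inv_mul_eq_div]
  linarith [(one_lt_div hlog).mpr hlt]

end Roots

section Length

open Real

theorem three_le_of_gFun_add_le {h : ℝ} (hh : 2 ≤ h) {n m : ℕ}
    (hm : gFun h + fFun h * logb 2 n ≤ m) : 3 ≤ m := by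
  have hlog : 0 ≤ fFun h * logb 2 n := mul_nonneg (fFun_pos hh).le
    (div_nonneg (log_natCast_nonneg n) (log_nonneg one_le_two))
  have : (2 : ℝ) < m := by linarith [two_lt_gFun hh]
  have : 2 < m := by exact_mod_cast this
  omega

theorem natCast_mul_sqrtDisc_le {h : ℝ} (hh : 2 ≤ h) {n m : ℕ} (hm1 : 1 ≤ m)
    (hm : gFun h + fFun h * logb 2 n ≤ m) : n * sqrtDisc h ≤ rootPlus h ^ (m - 1) := by
  have hroot : 0 < rootPlus h := by linarith [one_lt_rootPlus hh]
  have hS : 0 < sqrtDisc h := by linarith [rootPlus_lt_sqrtDisc hh]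
  rcases n.eq_zero_or_pos with rfl | hn
  · simp only [Nat.cast_zero, zero_mul]
    positivity
  have hL := logb_pos one_lt_two (one_lt_rootPlus hh)
  rw [gFun_eq_one_add_fFun_mul hh, fFun_eq_inv_logb_rootPlus hh] at hm
  have hlog : logb 2 (n * sqrtDisc h) ≤ logb 2 (rootPlus h ^ (m - 1)) := by
    rw [logb_mul (by positivity) hS.ne', logb_pow, Nat.cast_sub hm1, Nat.cast_one]
    have := mul_le_mul_of_nonneg_right hm hL.le
    field_simp at this
    linarith
  exact (logb_le_logb one_lt_two (by positivity) (by positivity)).mp hlog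

theorem le_of_gFun_add_le_of_recurrence {h n m : ℕ} (hh : 2 ≤ h) {s : ℕ → ℕ} (hs0 : s 0 = 1)
    (hs1 : s 1 = h - 1) (hrec : ∀ k, s (k + 2) = (h - 1) * (s (k + 1) + s k))
    (hm : gFun h + fFun h * logb 2 n ≤ m) : n ≤ s (m - 2) := by
  have hh' : (2 : ℝ) ≤ h := by exact_mod_cast hh
  have hm3 := three_le_of_gFun_add_le hh' hm
  have hcast : ((h - 1 : ℕ) : ℝ) = h - 1 := by rw [Nat.cast_sub (by omega), Nat.cast_one]
  have hbinet := mul_sub_eq_pow_sub_pow_of_recurrence (rootPlus_sq (h := h) (by linarith))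
    (rootMinus_sq (by linarith)) (u := fun k => (s k : ℝ)) (by simp [hs0]) (by simp [hs1, hcast])
    (fun k => by simp [hrec, hcast]) (m - 2)
  rw [rootPlus_sub_rootMinus, show m - 2 + 1 = m - 1 by omega] at hbinet
  have hpow := natCast_mul_sqrtDisc_le hh' (by omega) hm
  have hS : 0 < sqrtDisc h := by linarith [rootPlus_lt_sqrtDisc hh', one_lt_rootPlus hh']
  have hμ : rootMinus h ^ (m - 1) < sqrtDisc h := calc
    rootMinus h ^ (m - 1) ≤ |rootMinus h| ^ (m - 1) := by rw [← abs_pow]; exact le_abs_self _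
    _ ≤ 1 := pow_le_one₀ (abs_nonneg _) (abs_rootMinus_lt_one hh').le
    _ < sqrtDisc h := by linarith [rootPlus_lt_sqrtDisc hh', one_lt_rootPlus hh']
  have : (n : ℝ) < s (m - 2) + 1 :=
    lt_of_mul_lt_mul_right (by linarith) hS.le
  have : n < s (m - 2) + 1 := by exact_mod_cast this
  omega

end Length

open Finset in
theorem exists_factor_decodable_code_general {Q D : Type} [Fintype Q] [Fintype D]
    (hh : 2 ≤ Fintype.card D) :
    3 ≤ ⌈gFun (Fintype.card D : ℝ) +
          fFun (Fintype.card D : ℝ) * Real.logb 2 (Fintype.card Q : ℝ)⌉₊ ∧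
    ∃ c : Q → List D,
      IsFactorDecodableCode
        (⌈gFun (Fintype.card D : ℝ) +
            fFun (Fintype.card D : ℝ) * Real.logb 2 (Fintype.card Q : ℝ)⌉₊) c := by
  classical
  set x := gFun (Fintype.card D : ℝ) + fFun (Fintype.card D : ℝ) * Real.logb 2 (Fintype.card Q : ℝ)
  have hm : x ≤ ⌈x⌉₊ := Nat.le_ceil x
  set m := ⌈x⌉₊
  have hm3 : 3 ≤ m := three_le_of_gFun_add_le (by exact_mod_cast hh) hm
  obtain ⟨d⟩ : Nonempty D := Fintype.card_pos_iff.mp (by omega)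
  have hcard : Fintype.card Q ≤ #(doubleFreeTails d (m - 2)) :=
    le_of_gFun_add_le_of_recurrence hh (s := fun k => #(doubleFreeTails d k))
      (card_doubleFreeTails_zero d) (card_doubleFreeTails_one d) (card_doubleFreeTails_add_two d) hm
  obtain ⟨ι⟩ := Function.Embedding.nonempty_of_card_le (β := doubleFreeTails d (m - 2))
    (by simpa using hcard)
  have hι (q : Q) := length_eq_and_doubleFree_of_mem_doubleFreeTails (ι q).2
  exact ⟨hm3, _, isFactorDecodableCode_cons_cons hm3 d (Subtype.val_injective.comp ι.injective)
    (fun q => (hι q).1) (fun q => (hι q).2)⟩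

/-- For all finite alphabets `Q, D` with `n = |Q| ≥ 2` and
`h = |D|` satisfying `2 ≤ h < n`, there is a factor-decodable code of `Q` into
`D` of length `m = ⌈g(h) + f(h)·log₂ n⌉`, and this `m` satisfies `m ≥ 3`. -/
theorem exists_factor_decodable_code {Q D : Type} [Fintype Q] [Fintype D]
    (hn : 2 ≤ Fintype.card Q) (hh : 2 ≤ Fintype.card D)
    (hhn : Fintype.card D < Fintype.card Q) :
    3 ≤ ⌈gFun (Fintype.card D : ℝ) +
          fFun (Fintype.card D : ℝ) * Real.logb 2 (Fintype.card Q : ℝ)⌉₊ ∧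
    ∃ c : Q → List D,
      IsFactorDecodableCode
        (⌈gFun (Fintype.card D : ℝ) +
            fFun (Fintype.card D : ℝ) * Real.logb 2 (Fintype.card Q : ℝ)⌉₊) c :=
  exists_factor_decodable_code_general hh
end

section
/- Let M = (Q, A, E, q₀, F) be an NFA with total transition relation and |Q| > 1, let [·] : Q → D^m be a factor-decodable code of length m ≥ 2, and let L' ⊆ (A×D)^+ be the 2m-slt language defined by the sets I_{2m−1}, F_{2m}, T_{2m−1} of the path-encoding construction. Then α(L') ⊆ L(M), and every word w ∈ L(M) with |w| ≥ 3m belongs to α(L'); consequently, taking L'' = {w ∈ L(M) : |w| < 3m} (a finite language), α(L') ∪ L'' = L(M). -/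
/-- Encoding of a path `η` of length `≤ m`: the unique word `z ∈ (A × D)^{|η|}`
whose `A`-projection is the label of `η` and whose `D`-projection is the prefix
of length `|η|` of the codeword of the origin of `η` (the empty path encodes to
the empty word). -/
def encShort {Q A D : Type} (c : Q → List D) : List (Q × A × Q) → List (A × D)
  | [] => []
  | e :: t => (pathLabel (e :: t)).zip (c e.1)

/-- Encoding `[η]` of an arbitrary path `η`, obtained by encoding blockwise the
canonical decomposition of `η` into consecutive `m`-paths followed by one final
path of length `< m`. -/
def encPath {Q A D : Type} (c : Q → List D) (m : ℕ) (η : List (Q × A × Q)) :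
    List (A × D) :=
  if h : η.length ≤ m ∨ m = 0 then encShort c η
  else encShort c (η.take m) ++ encPath c m (η.drop m)
termination_by η.length
decreasing_by
  push_neg at h
  simp only [List.length_drop]
  omega

/-- The set `F_{2m}` of the path-encoding construction: all factors of length
`2m` of the encodings `[η'η''η''']` of three consecutive `m`-paths. -/
def Fset {Q A D : Type} (E : Set (Q × A × Q)) (c : Q → List D) (m : ℕ) :
    Set (List (A × D)) :=
  {w | ∃ η₁ η₂ η₃ : List (Q × A × Q),
    IsPath E (η₁ ++ η₂ ++ η₃) ∧ η₁.length = m ∧ η₂.length = m ∧ η₃.length = m ∧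
    w.length = 2 * m ∧ w <:+: encPath c m (η₁ ++ η₂ ++ η₃)}

/-- The set `I_{2m-1}` of the path-encoding construction: prefixes of length
`2m-1` of the encodings `[η'η'']` of two consecutive `m`-paths with
`δ([η']) = [q₀]`. -/
def Iset {Q A D : Type} (E : Set (Q × A × Q)) (q0 : Q) (c : Q → List D) (m : ℕ) :
    Set (List (A × D)) :=
  {w | ∃ η₁ η₂ : List (Q × A × Q),
    IsPath E (η₁ ++ η₂) ∧ η₁.length = m ∧ η₂.length = m ∧
    (encPath c m η₁).map Prod.snd = c q0 ∧
    w = (encPath c m (η₁ ++ η₂)).take (2 * m - 1)}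

/-- The set `T_{2m-1}` of the path-encoding construction: suffixes of length
`2m-1` of the encodings `[η'η''η''']` of consecutive paths with `|η'| = |η''| = m`,
`0 ≤ |η'''| < m` and `e(η''η''') ∈ F`. -/
def Tset {Q A D : Type} (E : Set (Q × A × Q)) (F : Set Q) (c : Q → List D) (m : ℕ) :
    Set (List (A × D)) :=
  {w | ∃ η₁ η₂ η₃ : List (Q × A × Q),
    IsPath E (η₁ ++ η₂ ++ η₃) ∧ η₁.length = m ∧ η₂.length = m ∧ η₃.length < m ∧
    (∃ q ∈ F, endState (η₂ ++ η₃) = some q) ∧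
    w = (encPath c m (η₁ ++ η₂ ++ η₃)).drop
      ((encPath c m (η₁ ++ η₂ ++ η₃)).length - (2 * m - 1))}

/-- The `2m`-slt language `L'` over `A × D` determined by the sets `I_{2m-1}`,
`T_{2m-1}`, `F_{2m}`: words `z` of length `≥ 2m` whose prefix of length `2m-1`
is in `I_{2m-1}`, whose suffix of length `2m-1` is in `T_{2m-1}`, and all of
whose factors of length `2m` are in `F_{2m}`. -/
def Lp {Q A D : Type} (E : Set (Q × A × Q)) (q0 : Q) (F : Set Q)
    (c : Q → List D) (m : ℕ) : Set (List (A × D)) :=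
  {z | 2 * m ≤ z.length ∧ z.take (2 * m - 1) ∈ Iset E q0 c m ∧
    z.drop (z.length - (2 * m - 1)) ∈ Tset E F c m ∧
    ∀ y : List (A × D), y.length = 2 * m → y <:+: z → y ∈ Fset E c m}

/-!
Factor-decodability synchronizes the `D`-track: if a codeword occurs at one of the first `2m`
positions of a concatenation of three codewords, it occurs at position `0` or `m` and is the
codeword there. So a window of `F_{2m}` whose first `m` letters carry the codeword `[q]` is the
encoding of two consecutive `m`-paths, the first one starting at `q`. Starting from `I_{2m-1}`
at `q₀` and chaining such windows block by block, and closing with `T_{2m-1}` read the same way,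
every word of `L'` is the encoding `[η]` of a successful path `η`, whose `A`-track is the label
of `η`. Conversely the encoding of a successful path of length `≥ 2m` satisfies the three
local conditions: each of its windows lies under three consecutive blocks of the path, once the
path is extended by one block, which totality of `E` allows.
-/

namespace List

variable {α β : Type*}

theorem map_snd_zip_eq_take : ∀ (l : List α) (l' : List β),
    (l.zip l').map Prod.snd = l'.take l.length
  | [], _ => by simp
  | _ :: _, [] => by simp
  | _ :: l, _ :: l' => by simp [map_snd_zip_eq_take l l']

theorem take_zip (l : List α) (l' : List β) (t : ℕ) :
    (l.zip l').take t = (l.take t).zip (l'.take t) := by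
  simp only [zip_eq_zipWith, take_zipWith]

theorem zip_take_right : ∀ (l : List α) (l' : List β) {t : ℕ}, l.length ≤ t →
    l.zip (l'.take t) = l.zip l'
  | [], _, _, _ => by simp
  | _ :: _, [], _, _ => by simp
  | _ :: l, _ :: l', t + 1, h => by simp [zip_take_right l l' (t := t) (by simpa using h)]

theorem drop_take_infix (l : List α) (i j : ℕ) : (l.drop i).take j <:+: l :=
  (take_prefix _ _).isInfix.trans (drop_suffix _ _).isInfix

theorem take_drop_take {l : List α} {n i k : ℕ} (h : i + k ≤ n) :
    ((l.take n).drop i).take k = (l.drop i).take k := by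
  rw [drop_take, take_take, min_eq_left (by omega)]

theorem IsInfix.exists_eq_take_drop_s9 {l₁ l₂ : List α} (h : l₁ <:+: l₂) :
    ∃ p, p + l₁.length ≤ l₂.length ∧ l₁ = (l₂.drop p).take l₁.length := by
  obtain ⟨s, t, rfl⟩ := h
  exact ⟨s.length, by simp, by rw [append_assoc, drop_left' rfl, take_left' rfl]⟩

theorem eq_take_append_take_drop_append_drop (l : List α) (m : ℕ) :
    l = l.take m ++ (l.drop m).take m ++ l.drop (2 * m) := by
  rw [append_assoc, two_mul, ← drop_drop, take_append_drop, take_append_drop]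

end List

theorem Nat.exists_eq_mul_add_two_mul_add {m n : ℕ} (hm : 0 < m) (h : 2 * m ≤ n) :
    ∃ k r, n = k * m + 2 * m + r ∧ r < m := by
  have h2 : 2 ≤ n / m := (Nat.le_div_iff_mul_le hm).2 h
  refine ⟨n / m - 2, n % m, ?_, Nat.mod_lt n hm⟩
  rw [← add_mul, Nat.sub_add_cancel h2, Nat.div_add_mod']

section Paths

variable {Q A : Type} {E : Set (Q × A × Q)} {σ τ η : List (Q × A × Q)}

theorem origState_append (hσ : σ ≠ []) (τ : List (Q × A × Q)) :
    origState (σ ++ τ) = origState σ := by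
  obtain ⟨e, σ, rfl⟩ := List.exists_cons_of_ne_nil hσ
  rfl

theorem endState_append (σ : List (Q × A × Q)) (hτ : τ ≠ []) :
    endState (σ ++ τ) = endState τ := by
  simp [endState, List.getLast?_append_of_ne_nil _ hτ]

theorem exists_origState_eq_some (h : η ≠ []) : ∃ q, origState η = some q := by
  obtain ⟨e, η, rfl⟩ := List.exists_cons_of_ne_nil h
  exact ⟨e.1, rfl⟩

theorem exists_endState_eq_some (h : η ≠ []) : ∃ q, endState η = some q := by
  obtain ⟨η, e, rfl⟩ := (List.eq_nil_or_concat' η).resolve_left h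
  exact ⟨e.2.2, by simp [endState]⟩

theorem origState_take {t : ℕ} (ht : 0 < t) : origState (η.take t) = origState η := by
  rcases η with _ | ⟨e, η⟩
  · simp
  obtain ⟨t, rfl⟩ := Nat.exists_eq_add_of_lt ht
  rfl

theorem endState_drop {t : ℕ} (ht : t < η.length) : endState (η.drop t) = endState η := by
  conv_rhs => rw [← List.take_append_drop t η]
  exact (endState_append _ (List.ne_nil_of_length_pos (by simp; omega))).symm

theorem pathLabel_append (σ τ : List (Q × A × Q)) :
    pathLabel (σ ++ τ) = pathLabel σ ++ pathLabel τ :=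
  List.map_append

theorem IsPath.infix (h : IsPath E η) (hσ : σ <:+: η) (hne : σ ≠ []) : IsPath E σ :=
  ⟨hne, fun e he => h.2.1 e (hσ.subset he), h.2.2.infix hσ⟩

theorem IsPath.append (hσ : IsPath E σ) (hτ : IsPath E τ) (h : endState σ = origState τ) :
    IsPath E (σ ++ τ) := by
  refine ⟨by simp [hσ.1], fun e he => ?_, hσ.2.2.append hτ.2.2 fun x hx y hy => ?_⟩
  · rcases List.mem_append.1 he with he | he
    exacts [hσ.2.1 e he, hτ.2.1 e he]
  · rw [Option.mem_def] at hx hy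
    simpa [endState, origState, hx, hy] using h

theorem IsPath.endState_eq_origState (h : IsPath E (σ ++ τ)) (hσ : σ ≠ []) (hτ : τ ≠ []) :
    endState σ = origState τ := by
  have := h.2.2.rel_getLast_head_of_append hσ hτ
  simp [endState, origState, List.getLast?_eq_some_getLast hσ, List.head?_eq_some_head hτ, this]

theorem IsPath.exists_append (hTot : TotalRel E) (h : IsPath E η) :
    ∀ t, ∃ τ : List (Q × A × Q), τ.length = t ∧ IsPath E (η ++ τ)
  | 0 => ⟨[], rfl, by simpa using h⟩
  | t + 1 => by
    obtain ⟨τ, hτ, hητ⟩ := h.exists_append hTot t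
    obtain ⟨q, hq⟩ := exists_endState_eq_some hητ.1
    obtain ⟨p, hp⟩ := hTot q (η.head h.1).2.1
    refine ⟨τ ++ [(q, (η.head h.1).2.1, p)], by simp [hτ], ?_⟩
    rw [← List.append_assoc]
    exact hητ.append ⟨by simp, by simpa using hp, List.isChain_singleton _⟩ hq

end Paths

section Encoding

variable {Q A D : Type} {c : Q → List D} {m : ℕ} {σ τ η : List (Q × A × Q)}

theorem map_snd_encShort {o : Q} (ho : origState η = some o) :
    (encShort c η).map Prod.snd = (c o).take η.length := by
  obtain ⟨e, η, rfl⟩ := List.exists_cons_of_ne_nil (show η ≠ [] by rintro rfl; cases ho)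
  obtain rfl : e.1 = o := Option.some.inj ho
  simp [encShort, List.map_snd_zip_eq_take, pathLabel]

theorem take_encShort (t : ℕ) : (encShort c η).take t = encShort c (η.take t) := by
  rcases η with _ | ⟨e, η⟩
  · simp [encShort]
  rcases t with _ | t
  · simp [encShort]
  rw [encShort, List.take_zip, pathLabel, ← List.map_take, List.zip_take_right _ _ (by simp)]
  rfl

theorem encPath_of_length_le (h : η.length ≤ m) : encPath c m η = encShort c η := by
  rw [encPath, dif_pos (Or.inl h)]

theorem encPath_nil : encPath c m ([] : List (Q × A × Q)) = [] :=
  encPath_of_length_le (Nat.zero_le m)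

theorem encPath_append_of_length_eq (hm : 0 < m) (hσ : σ.length = m) (τ : List (Q × A × Q)) :
    encPath c m (σ ++ τ) = encShort c σ ++ encPath c m τ := by
  by_cases hτ : τ = []
  · subst hτ
    rw [List.append_nil, encPath_nil, List.append_nil, encPath_of_length_le hσ.le]
  have := List.length_pos_iff.2 hτ
  rw [encPath, dif_neg (by rw [List.length_append, hσ]; omega), List.take_left' hσ,
    List.drop_left' hσ]

theorem encPath_append (hm : 0 < m) {k : ℕ} (hσ : σ.length = k * m) (τ : List (Q × A × Q)) :
    encPath c m (σ ++ τ) = encPath c m σ ++ encPath c m τ := by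
  induction k generalizing σ with
  | zero =>
    obtain rfl : σ = [] := List.eq_nil_of_length_eq_zero (by simpa using hσ)
    rw [List.nil_append, encPath_nil, List.nil_append]
  | succ k ih =>
    have hσm : (σ.take m).length = m := by simp [hσ, Nat.succ_mul]
    rw [← List.take_append_drop m σ, List.append_assoc,
      encPath_append_of_length_eq hm hσm, encPath_append_of_length_eq hm hσm,
      ih (by simp [hσ, Nat.succ_mul]), List.append_assoc]

theorem encPath_three (hm : 0 < m) {η₁ η₂ η₃ : List (Q × A × Q)} (h₁ : η₁.length = m)
    (h₂ : η₂.length = m) (h₃ : η₃.length ≤ m) :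
    encPath c m (η₁ ++ η₂ ++ η₃) = encShort c η₁ ++ encShort c η₂ ++ encShort c η₃ := by
  rw [List.append_assoc, encPath_append_of_length_eq hm h₁, encPath_append_of_length_eq hm h₂,
    encPath_of_length_le h₃, List.append_assoc]

theorem length_encShort (hlen : ∀ q, (c q).length = m) (h : η.length ≤ m) :
    (encShort c η).length = η.length := by
  rcases η with _ | ⟨e, η⟩
  · rfl
  simp only [List.length_cons] at h
  simp [encShort, pathLabel, hlen]
  omega

theorem map_fst_encShort (hlen : ∀ q, (c q).length = m) (h : η.length ≤ m) :
    (encShort c η).map Prod.fst = pathLabel η := by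
  rcases η with _ | ⟨e, η⟩
  · rfl
  exact List.map_fst_zip (by simpa [pathLabel, hlen] using h)

theorem map_snd_encShort_of_length_eq (hlen : ∀ q, (c q).length = m) {o : Q} (h : η.length = m)
    (ho : origState η = some o) :
    (encShort c η).map Prod.snd = c o := by
  rw [map_snd_encShort ho, h, ← hlen o, List.take_length]

theorem length_encPath (hlen : ∀ q, (c q).length = m) (hm : 0 < m) (η : List (Q × A × Q)) :
    (encPath c m η).length = η.length := by
  by_cases h : η.length ≤ m
  · rw [encPath_of_length_le h, length_encShort hlen h]
  have hm' : (η.take m).length = m := by simp; omega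
  conv_lhs => rw [← List.take_append_drop m η]
  rw [encPath_append_of_length_eq hm hm', List.length_append, length_encShort hlen hm'.le,
    length_encPath hlen hm (η.drop m), hm']
  simp; omega
termination_by η.length
decreasing_by simp; omega

theorem map_fst_encPath (hlen : ∀ q, (c q).length = m) (hm : 0 < m) (η : List (Q × A × Q)) :
    (encPath c m η).map Prod.fst = pathLabel η := by
  by_cases h : η.length ≤ m
  · rw [encPath_of_length_le h, map_fst_encShort hlen h]
  have hm' : (η.take m).length = m := by simp; omega
  conv_lhs => rw [← List.take_append_drop m η]
  rw [encPath_append_of_length_eq hm hm', List.map_append, map_fst_encShort hlen hm'.le,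
    map_fst_encPath hlen hm (η.drop m), ← pathLabel_append, List.take_append_drop]
termination_by η.length
decreasing_by simp; omega

theorem take_encPath (hlen : ∀ q, (c q).length = m) (hm : 0 < m) (η : List (Q × A × Q)) (t : ℕ) :
    (encPath c m η).take t = encPath c m (η.take t) := by
  by_cases h : η.length ≤ m
  · rw [encPath_of_length_le h, encPath_of_length_le (by simp; omega), take_encShort]
  have hm' : (η.take m).length = m := by simp; omega
  conv_lhs => rw [← List.take_append_drop m η]
  rw [encPath_append_of_length_eq hm hm']
  by_cases ht : t ≤ m
  · rw [List.take_append_of_le_length (by rw [length_encShort hlen hm'.le]; omega), take_encShort,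
      List.take_take, min_eq_left ht, encPath_of_length_le (by simp; omega)]
  · obtain ⟨s, rfl⟩ := Nat.exists_eq_add_of_le (not_le.1 ht).le
    rw [List.take_add (l := η), encPath_append_of_length_eq hm hm', List.take_append,
      List.take_of_length_le (by rw [length_encShort hlen hm'.le]; omega),
      length_encShort hlen hm'.le, hm', Nat.add_sub_cancel_left, take_encPath hlen hm (η.drop m)]
termination_by η.length
decreasing_by simp; omega

theorem drop_encPath (hlen : ∀ q, (c q).length = m) (hm : 0 < m) (η : List (Q × A × Q))
    (k : ℕ) : (encPath c m η).drop (k * m) = encPath c m (η.drop (k * m)) := by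
  rcases le_or_gt (k * m) η.length with hk | hk
  · conv_lhs => rw [← List.take_append_drop (k * m) η]
    rw [encPath_append hm (k := k) (by simp [hk]),
      List.drop_left' (by simp [length_encPath hlen hm, hk])]
  · rw [List.drop_of_length_le (by rw [length_encPath hlen hm]; omega),
      List.drop_of_length_le hk.le, encPath_nil]

end Encoding

section Decoding

variable {Q A D : Type} {E : Set (Q × A × Q)} {F : Set Q} {c : Q → List D} {m : ℕ}

theorem IsFactorDecodableCode.eq_of_take_drop_eq (hc : IsFactorDecodableCode m c)
    {o₁ o₂ o₃ q : Q} {t : ℕ} (ht : t < 2 * m)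
    (hq : ((c o₁ ++ c o₂ ++ c o₃).drop t).take m = c q) :
    t = 0 ∧ q = o₁ ∨ t = m ∧ q = o₂ := by
  obtain ⟨⟨hinj, hlen⟩, hfd⟩ := hc
  set l := c o₁ ++ c o₂ ++ c o₃
  have hl : l.length = 3 * m := by simp [l, hlen]; omega
  have h₁ : (l.drop 0).take m = c o₁ := by simp [l, List.take_left' (hlen o₁)]
  have h₂ : (l.drop m).take m = c o₂ := by
    rw [show l = c o₁ ++ (c o₂ ++ c o₃) from List.append_assoc .., List.drop_left' (hlen o₁),
      List.take_left' (hlen o₂)]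
  have unique : ∀ p ≤ m, ∀ i < m, ∀ i' < m, ∀ q q', (l.drop (p + i)).take m = c q →
      (l.drop (p + i')).take m = c q' → i = i' := by
    intro p hp i hi i' hi' q q' hq hq'
    have hwin : FactorDecodableWord m c ((l.drop p).take (2 * m - 1)) :=
      hfd [o₁, o₂, o₃] (by simp) _ (by simp [hl]; omega)
        (by simpa [l] using List.drop_take_infix l p (2 * m - 1))
    have := hwin.unique
      (y₁ := i + 1) ⟨by omega, by omega, q, by
        rw [Nat.add_sub_cancel, List.take_drop_take (by omega), List.drop_drop, hq]⟩
      (y₂ := i' + 1) ⟨by omega, by omega, q', by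
        rw [Nat.add_sub_cancel, List.take_drop_take (by omega), List.drop_drop, hq']⟩
    omega
  rcases Nat.lt_or_ge t m with htm | htm
  · have ht0 : t = 0 := by
      by_contra ht0
      have := unique t htm.le 0 (by omega) (m - t) (by omega) q o₂ hq
        (by rwa [show t + (m - t) = m by omega])
      omega
    subst ht0
    exact Or.inl ⟨rfl, hinj (hq.symm.trans h₁)⟩
  · have htm' : t = m := by
      have := unique m le_rfl (t - m) (by omega) 0 (by omega) q o₂
        (by rwa [show m + (t - m) = t by omega]) h₂
      omega
    subst htm'
    exact Or.inr ⟨rfl, hinj (hq.symm.trans h₂)⟩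

theorem take_map_snd_of_mem_Iset (hlen : ∀ q, (c q).length = m) (hm : 0 < m) {q₀ : Q}
    {w : List (A × D)} (hw : w ∈ Iset E q₀ c m) : (w.map Prod.snd).take m = c q₀ := by
  obtain ⟨η₁, η₂, -, h₁, -, hq₀, rfl⟩ := hw
  rw [encPath_of_length_le h₁.le] at hq₀
  rw [encPath_append_of_length_eq hm h₁, List.map_take, List.take_take, min_eq_left (by omega),
    List.map_append, List.take_left' (by simp [length_encShort hlen h₁.le, h₁]), hq₀]

theorem exists_eq_encShort_append_of_mem_Fset (hc : IsFactorDecodableCode m c) (hm : 0 < m)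
    {y : List (A × D)} (hy : y ∈ Fset E c m) {q : Q} (hq : (y.map Prod.snd).take m = c q) :
    ∃ θ θ', IsPath E (θ ++ θ') ∧ θ.length = m ∧ θ'.length = m ∧ origState θ = some q ∧
      y = encShort c θ ++ encShort c θ' := by
  have hlen := hc.1.2
  obtain ⟨η₁, η₂, η₃, hη, h₁, h₂, h₃, hylen, hinf⟩ := hy
  rw [encPath_three hm h₁ h₂ h₃.le] at hinf
  obtain ⟨o₁, ho₁⟩ := exists_origState_eq_some (List.ne_nil_of_length_pos (h₁ ▸ hm))
  obtain ⟨o₂, ho₂⟩ := exists_origState_eq_some (List.ne_nil_of_length_pos (h₂ ▸ hm))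
  obtain ⟨o₃, ho₃⟩ := exists_origState_eq_some (List.ne_nil_of_length_pos (h₃ ▸ hm))
  obtain ⟨p, hp, hyp⟩ := hinf.exists_eq_take_drop_s9
  rw [hylen] at hyp hp
  simp only [List.length_append, length_encShort hlen h₁.le, length_encShort hlen h₂.le,
    length_encShort hlen h₃.le, h₁, h₂, h₃] at hp
  have hpq : ((c o₁ ++ c o₂ ++ c o₃).drop p).take m = c q := by
    rw [← hq, hyp, List.map_take, List.map_drop, List.take_take, min_eq_left (by omega)]
    simp only [List.map_append, map_snd_encShort_of_length_eq hlen h₁ ho₁,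
      map_snd_encShort_of_length_eq hlen h₂ ho₂, map_snd_encShort_of_length_eq hlen h₃ ho₃]
  rcases hc.eq_of_take_drop_eq (by omega) hpq with ⟨rfl, rfl⟩ | ⟨rfl, rfl⟩
  · refine ⟨η₁, η₂, hη.infix (List.prefix_append _ _).isInfix
      (List.ne_nil_of_length_pos (by simp [h₁, hm])), h₁, h₂, ho₁, ?_⟩
    rw [hyp, List.drop_zero, List.take_left' (by simp [length_encShort hlen, h₁, h₂]; omega)]
  · refine ⟨η₂, η₃, hη.infix ⟨η₁, [], by simp⟩ (List.ne_nil_of_length_pos (by simp [h₂, hm])),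
      h₂, h₃, ho₂, ?_⟩
    rw [hyp, List.append_assoc, List.drop_left' (by simp [length_encShort hlen, h₁]),
      List.take_of_length_le (by simp [length_encShort hlen, h₂, h₃]; omega)]

theorem exists_path_of_mem_Fset (hc : IsFactorDecodableCode m c) (hm : 0 < m) {y : List (A × D)}
    (hy : y ∈ Fset E c m) {q : Q} (hq : (y.map Prod.snd).take m = c q) :
    ∃ θ q', IsPath E θ ∧ θ.length = m ∧ origState θ = some q ∧ endState θ = some q' ∧
      y.take m = encPath c m θ ∧ ((y.map Prod.snd).drop m).take m = c q' := by
  have hlen := hc.1.2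
  obtain ⟨θ, θ', hθθ', hθ, hθ', hθq, rfl⟩ := exists_eq_encShort_append_of_mem_Fset hc hm hy hq
  have hθne : θ ≠ [] := List.ne_nil_of_length_pos (hθ ▸ hm)
  have hθ'ne : θ' ≠ [] := List.ne_nil_of_length_pos (hθ' ▸ hm)
  obtain ⟨q', hq'⟩ := exists_origState_eq_some hθ'ne
  have hθlen : (encShort c θ).length = m := (length_encShort hlen hθ.le).trans hθ
  refine ⟨θ, q', hθθ'.infix (List.prefix_append _ _).isInfix hθne, hθ, hθq,
    (hθθ'.endState_eq_origState hθne hθ'ne).trans hq', ?_, ?_⟩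
  · rw [List.take_left' hθlen, encPath_of_length_le hθ.le]
  · rw [List.map_append, List.drop_left' (by rw [List.length_map, hθlen]),
      map_snd_encShort_of_length_eq hlen hθ' hq', List.take_of_length_le (hlen q').le]

theorem exists_path_of_mem_Tset (hc : IsFactorDecodableCode m c) (hm : 0 < m) {s : List (A × D)}
    (hs : s ∈ Tset E F c m) {i : ℕ} (hi : i < m) {q : Q}
    (hq : ((s.map Prod.snd).drop i).take m = c q) :
    ∃ θ, IsPath E θ ∧ origState θ = some q ∧ (∃ qf ∈ F, endState θ = some qf) ∧
      s.drop i = encPath c m θ := by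
  have hlen := hc.1.2
  obtain ⟨η₁, η₂, η₃, hη, h₁, h₂, h₃, hF, rfl⟩ := hs
  have hη₂ : η₂ ≠ [] := List.ne_nil_of_length_pos (h₂ ▸ hm)
  obtain ⟨o₁, ho₁⟩ := exists_origState_eq_some (List.ne_nil_of_length_pos (h₁ ▸ hm))
  obtain ⟨o₂, ho₂⟩ := exists_origState_eq_some hη₂
  -- an empty last block has no origin, but then any codeword extends its (empty) `D`-track
  obtain ⟨o₃, ho₃⟩ : ∃ o₃, (encShort c η₃).map Prod.snd = (c o₃).take η₃.length := by
    rcases η₃ with _ | ⟨e, η₃⟩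
    · exact ⟨o₂, by simp [encShort]⟩
    · exact ⟨e.1, map_snd_encShort rfl⟩
  rw [encPath_three hm h₁ h₂ h₃.le] at hq ⊢
  set W := encShort c η₁ ++ encShort c η₂ ++ encShort c η₃
  have hWlen : W.length = 2 * m + η₃.length := by
    simp [W, length_encShort hlen, h₁, h₂, h₃.le]; omega
  have hWsnd : W.map Prod.snd = (c o₁ ++ c o₂ ++ c o₃).take (2 * m + η₃.length) := by
    simp only [W, List.map_append, map_snd_encShort_of_length_eq hlen h₁ ho₁,
      map_snd_encShort_of_length_eq hlen h₂ ho₂, ho₃, List.take_append, List.length_append,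
      hlen, show 2 * m + η₃.length - (m + m) = η₃.length by omega]
    rw [List.take_of_length_le (l := c o₁) (by rw [hlen]; omega),
      List.take_of_length_le (l := c o₂) (by rw [hlen]; omega)]
  rw [hWlen, show 2 * m + η₃.length - (2 * m - 1) = η₃.length + 1 by omega] at hq ⊢
  rw [List.map_drop, List.drop_drop, hWsnd, List.take_drop_take (by omega)] at hq
  obtain ⟨ht, rfl⟩ := (hc.eq_of_take_drop_eq (by omega) hq).resolve_left (by omega)
  refine ⟨η₂ ++ η₃, hη.infix ⟨η₁, [], by simp⟩ (by simp [hη₂]),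
    (origState_append hη₂ _).trans ho₂, hF, ?_⟩
  rw [List.drop_drop, ht, show W = encShort c η₁ ++ (encShort c η₂ ++ encShort c η₃) from
    List.append_assoc .., List.drop_left' (by simp [length_encShort hlen, h₁]),
    encPath_append_of_length_eq hm h₂, encPath_of_length_le h₃.le]

theorem exists_path_encPath_eq_take (hc : IsFactorDecodableCode m c) (hm : 0 < m)
    {z : List (A × D)} (hF : ∀ y : List (A × D), y.length = 2 * m → y <:+: z → y ∈ Fset E c m)
    {q₀ : Q} (h₀ : (z.map Prod.snd).take m = c q₀) (k : ℕ) (hk : (k + 2) * m ≤ z.length) :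
    ∃ π q, IsPath E π ∧ π.length = (k + 1) * m ∧ origState π = some q₀ ∧
      endState π = some q ∧ z.take ((k + 1) * m) = encPath c m π ∧
      ((z.map Prod.snd).drop ((k + 1) * m)).take m = c q := by
  have step : ∀ k q, (k + 2) * m ≤ z.length → ((z.map Prod.snd).drop (k * m)).take m = c q →
      ∃ θ q', IsPath E θ ∧ θ.length = m ∧ origState θ = some q ∧ endState θ = some q' ∧
        (z.drop (k * m)).take m = encPath c m θ ∧
        ((z.map Prod.snd).drop ((k + 1) * m)).take m = c q' := by
    intro k q hk hq
    have e : (k + 2) * m = k * m + 2 * m := by ring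
    have hy := hF ((z.drop (k * m)).take (2 * m)) (by simp; omega) (List.drop_take_infix ..)
    obtain ⟨θ, q', hθ, hθlen, hθo, hθe, henc, hq'⟩ := exists_path_of_mem_Fset hc hm hy (q := q)
      (by rw [List.map_take, List.map_drop, List.take_take, min_eq_left (by omega), hq])
    refine ⟨θ, q', hθ, hθlen, hθo, hθe, by rwa [List.take_take, min_eq_left (by omega)] at henc,
      ?_⟩
    rwa [List.map_take, List.map_drop, List.drop_take, List.drop_drop, List.take_take,
      min_eq_left (by omega), ← Nat.succ_mul] at hq'
  induction k with
  | zero =>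
    obtain ⟨θ, q', hθ, hθlen, hθo, hθe, henc, hq'⟩ := step 0 q₀ hk (by simpa using h₀)
    exact ⟨θ, q', hθ, by simpa using hθlen, hθo, hθe, by simpa using henc, hq'⟩
  | succ k ih =>
    obtain ⟨π, q, hπ, hπlen, hπo, hπe, hπz, hq⟩ := ih (le_trans (by nlinarith) hk)
    obtain ⟨θ, q', hθ, hθlen, hθo, hθe, henc, hq'⟩ := step (k + 1) q hk hq
    refine ⟨π ++ θ, q', hπ.append hθ (hπe.trans hθo.symm), ?_,
      (origState_append hπ.1 θ).trans hπo, (endState_append π hθ.1).trans hθe, ?_, hq'⟩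
    · rw [List.length_append, hπlen, hθlen, Nat.succ_mul (k + 1)]
    · rw [Nat.succ_mul (k + 1), List.take_add, hπz, henc, encPath_append hm hπlen]

theorem exists_path_of_mem_Lp (hc : IsFactorDecodableCode m c) (hm : 0 < m) {q₀ : Q}
    {z : List (A × D)} (hz : z ∈ Lp E q₀ F c m) :
    ∃ η, IsPath E η ∧ origState η = some q₀ ∧ (∃ qf ∈ F, endState η = some qf) ∧
      z = encPath c m η := by
  obtain ⟨hz2, hI, hT, hF⟩ := hz
  obtain ⟨k, r, hzlen, hr⟩ := Nat.exists_eq_mul_add_two_mul_add hm hz2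
  have e : (k + 1) * m = k * m + m := Nat.succ_mul k m
  obtain ⟨π, q, hπ, hπlen, hπo, hπe, hπz, hq⟩ := exists_path_encPath_eq_take hc hm hF
    (by rw [← take_map_snd_of_mem_Iset hc.1.2 hm hI, List.map_take, List.take_take,
      min_eq_left (by omega)]) k (by rw [Nat.add_mul]; omega)
  -- the last complete block of `z` starts at offset `m - r - 1` of the suffix in `Tset`
  have hoff : z.length - (2 * m - 1) + (m - r - 1) = (k + 1) * m := by omega
  obtain ⟨θ, hθ, hθo, ⟨qf, hqf, hθe⟩, hθz⟩ :=
    exists_path_of_mem_Tset hc hm hT (i := m - r - 1) (by omega)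
      (by rw [List.map_drop, List.drop_drop, hoff, hq])
  rw [List.drop_drop, hoff] at hθz
  refine ⟨π ++ θ, hπ.append hθ (hπe.trans hθo.symm), (origState_append hπ.1 θ).trans hπo,
    ⟨qf, hqf, (endState_append π hθ.1).trans hθe⟩, ?_⟩
  rw [encPath_append hm hπlen, ← hπz, ← hθz, List.take_append_drop]

end Decoding

section Completeness

variable {Q A D : Type} {E : Set (Q × A × Q)} {F : Set Q} {c : Q → List D} {m : ℕ}
  {η : List (Q × A × Q)}

theorem encPath_take_mem_Iset (hlen : ∀ q, (c q).length = m) (hm : 0 < m) {q₀ : Q}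
    (hη : IsPath E η) (ho : origState η = some q₀) (h : 2 * m ≤ η.length) :
    (encPath c m η).take (2 * m - 1) ∈ Iset E q₀ c m := by
  have h₁ : (η.take m).length = m := by simp; omega
  have h₂ : ((η.drop m).take m).length = m := by simp; omega
  have h₁₂ : η.take m ++ (η.drop m).take m = η.take (2 * m) := by rw [two_mul, List.take_add]
  refine ⟨η.take m, (η.drop m).take m, h₁₂ ▸ hη.infix (List.take_prefix _ _).isInfix
    (List.ne_nil_of_length_pos (by simp; omega)), h₁, h₂, ?_, ?_⟩
  · rw [encPath_of_length_le h₁.le,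
      map_snd_encShort_of_length_eq hlen h₁ ((origState_take hm).trans ho)]
  · rw [h₁₂, ← take_encPath hlen hm, List.take_take, min_eq_left (by omega)]

theorem encPath_drop_mem_Tset (hlen : ∀ q, (c q).length = m) (hm : 0 < m)
    (hη : IsPath E η) (he : ∃ qf ∈ F, endState η = some qf) (h : 2 * m ≤ η.length) :
    (encPath c m η).drop ((encPath c m η).length - (2 * m - 1)) ∈ Tset E F c m := by
  obtain ⟨k, r, hηlen, hr⟩ := Nat.exists_eq_mul_add_two_mul_add hm h
  set ρ := η.drop (k * m) with hρ_def
  have hρ : ρ.length = 2 * m + r := by simp [ρ]; omega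
  refine ⟨ρ.take m, (ρ.drop m).take m, ρ.drop (2 * m), ?_, by simp [hρ]; omega,
    by simp [hρ]; omega, by simp [hρ]; omega, ?_, ?_⟩
  · rw [← List.eq_take_append_take_drop_append_drop]
    exact hη.infix (List.drop_suffix _ _).isInfix (List.ne_nil_of_length_pos (by omega))
  · rw [two_mul, ← List.drop_drop, List.take_append_drop, hρ_def, List.drop_drop,
      endState_drop (by omega)]
    exact he
  · rw [← List.eq_take_append_take_drop_append_drop, ← drop_encPath hlen hm, List.drop_drop,
      List.length_drop, length_encPath hlen hm]
    congr 1
    omega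

theorem take_drop_encPath_mem_Fset (hlen : ∀ q, (c q).length = m) (hm : 0 < m)
    (hη : IsPath E η) {p : ℕ} (hp : p + 3 * m ≤ η.length) :
    ((encPath c m η).drop p).take (2 * m) ∈ Fset E c m := by
  have hp' := Nat.div_add_mod' p m
  have hpm := Nat.mod_lt p hm
  set σ := (η.drop (p / m * m)).take (3 * m) with hσ_def
  have hσ : σ.length = 3 * m := by simp [σ]; omega
  refine ⟨σ.take m, (σ.drop m).take m, σ.drop (2 * m), ?_, by simp [hσ]; omega,
    by simp [hσ]; omega, by simp [hσ]; omega, by simp [length_encPath hlen hm]; omega, ?_⟩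
  · rw [← List.eq_take_append_take_drop_append_drop]
    exact hη.infix (List.drop_take_infix ..) (List.ne_nil_of_length_pos (by omega))
  · have hwin : ((encPath c m η).drop p).take (2 * m) =
        (((encPath c m (η.drop (p / m * m))).take (3 * m)).drop (p % m)).take (2 * m) := by
      rw [List.take_drop_take (by omega), ← drop_encPath hlen hm, List.drop_drop, hp']
    rw [hwin, take_encPath hlen hm, ← hσ_def, ← List.eq_take_append_take_drop_append_drop]
    exact List.drop_take_infix ..

theorem encPath_mem_Lp (hTot : TotalRel E) (hlen : ∀ q, (c q).length = m) (hm : 0 < m)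
    {q₀ : Q} (hη : IsPath E η) (ho : origState η = some q₀)
    (he : ∃ qf ∈ F, endState η = some qf) (h : 2 * m ≤ η.length) :
    encPath c m η ∈ Lp E q₀ F c m := by
  refine ⟨by rwa [length_encPath hlen hm], encPath_take_mem_Iset hlen hm hη ho h,
    encPath_drop_mem_Tset hlen hm hη he h, fun y hy hinf => ?_⟩
  obtain ⟨p, hp, hyp⟩ := hinf.exists_eq_take_drop_s9
  rw [hy, length_encPath hlen hm] at hp
  -- the factors near the end of `η` are read in an extension of `η` by one more block
  obtain ⟨τ, hτ, hητ⟩ := hη.exists_append hTot m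
  rw [hyp, hy, ← List.take_left' (l₁ := η) (l₂ := τ) rfl, ← take_encPath hlen hm,
    List.take_drop_take (by omega)]
  exact take_drop_encPath_mem_Fset hlen hm hητ (by simp [hτ]; omega)

end Completeness

theorem encoding_lang_eq_general {Q A D : Type} [Fintype A]
    (E : Set (Q × A × Q)) (q0 : Q) (F : Set Q)
    (hTot : TotalRel E)
    (m : ℕ) (hm : 2 ≤ m) (c : Q → List D) (hc : IsFactorDecodableCode m c) :
    (List.map (Prod.fst : A × D → A)) '' Lp E q0 F c m ⊆ nfaLang E q0 F ∧
    (∀ w ∈ nfaLang E q0 F, 3 * m ≤ w.length →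
      w ∈ (List.map (Prod.fst : A × D → A)) '' Lp E q0 F c m) ∧
    {w ∈ nfaLang E q0 F | w.length < 3 * m}.Finite ∧
    (List.map (Prod.fst : A × D → A)) '' Lp E q0 F c m ∪
      {w ∈ nfaLang E q0 F | w.length < 3 * m} = nfaLang E q0 F := by
  have hm0 : 0 < m := by omega
  have hlen := hc.1.2
  have sound : (List.map (Prod.fst : A × D → A)) '' Lp E q0 F c m ⊆ nfaLang E q0 F := by
    rintro _ ⟨z, hz, rfl⟩
    obtain ⟨η, hη, ho, he, rfl⟩ := exists_path_of_mem_Lp hc hm0 hz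
    exact ⟨η, hη, ho, he, map_fst_encPath hlen hm0 η⟩
  have complete : ∀ w ∈ nfaLang E q0 F, 3 * m ≤ w.length →
      w ∈ (List.map (Prod.fst : A × D → A)) '' Lp E q0 F c m := by
    rintro _ ⟨η, hη, ho, he, rfl⟩ hw
    have : 2 * m ≤ η.length := by simp [pathLabel] at hw; omega
    exact ⟨encPath c m η, encPath_mem_Lp hTot hlen hm0 hη ho he this, map_fst_encPath hlen hm0 η⟩
  refine ⟨sound, complete, (List.finite_length_lt A (3 * m)).subset fun w hw => hw.2,
    Set.Subset.antisymm (Set.union_subset sound fun w hw => hw.1) fun w hw => ?_⟩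
  rcases lt_or_ge w.length (3 * m) with h | h
  exacts [Or.inr ⟨hw, h⟩, Or.inl (complete w hw h)]

/-- For the `2m`-slt language `L'` of the path-encoding
construction (with a factor-decodable code), `α(L') ⊆ L(M)`, every word of
`L(M)` of length `≥ 3m` is in `α(L')`, and hence `α(L') ∪ L'' = L(M)` where
`L''` is the finite language of words of `L(M)` of length `< 3m`. -/
theorem encoding_lang_eq {Q A D : Type} [Fintype Q] [Fintype A]
    (E : Set (Q × A × Q)) (q0 : Q) (F : Set Q) (hq0 : q0 ∉ F)
    (hTot : TotalRel E) (hn : 1 < Fintype.card Q)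
    (m : ℕ) (hm : 2 ≤ m) (c : Q → List D) (hc : IsFactorDecodableCode m c) :
    (List.map (Prod.fst : A × D → A)) '' Lp E q0 F c m ⊆ nfaLang E q0 F ∧
    (∀ w ∈ nfaLang E q0 F, 3 * m ≤ w.length →
      w ∈ (List.map (Prod.fst : A × D → A)) '' Lp E q0 F c m) ∧
    {w ∈ nfaLang E q0 F | w.length < 3 * m}.Finite ∧
    (List.map (Prod.fst : A × D → A)) '' Lp E q0 F c m ∪
      {w ∈ nfaLang E q0 F | w.length < 3 * m} = nfaLang E q0 F :=
  encoding_lang_eq_general E q0 F hTot m hm c hc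
end

section
/- The function g satisfies g(h) ≥ 2 for all real h ≥ 2, and lim_{h→∞} g(h) = 2. -/
open Real Filter Topology

theorem tendsto_log_add_div_log_add (c d : ℝ) :
    Tendsto (fun x ↦ log (x + c) / log (x + d)) atTop (𝓝 1) := by
  have hshift : Tendsto (fun x : ℝ ↦ x + d) atTop atTop :=
    tendsto_atTop_add_const_right _ d tendsto_id
  have hdiff : Tendsto (fun x ↦ (log (x + c) - log (x + d)) / log (x + d)) atTop (𝓝 0) := by
    have hnum : Tendsto (fun x ↦ log (x + c) - log (x + d)) atTop (𝓝 0) := by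
      refine ((tendsto_log_comp_add_sub_log (c - d)).comp hshift).congr fun x ↦ ?_
      simp only [Function.comp_apply]
      ring_nf
    exact hnum.div_atTop (tendsto_log_atTop.comp hshift)
  have hone := hdiff.const_add 1
  rw [add_zero] at hone
  refine hone.congr' ?_
  filter_upwards [(tendsto_log_atTop.comp hshift).eventually_gt_atTop 0] with x hx
  simp only [Function.comp_apply] at hx
  field_simp
  ring

theorem lt_sqrt_mul_of_lt {a b : ℝ} (ha : 0 < a) (hab : a < b) : a < √(a * b) := by
  rw [lt_sqrt ha.le]; nlinarith

theorem sqrt_mul_lt_of_lt {a b : ℝ} (ha : 0 ≤ a) (hab : a < b) : √(a * b) < b := by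
  rw [sqrt_lt' (by linarith)]; nlinarith

theorem one_le_log_div_log {x y : ℝ} (hx : 1 < x) (hxy : x ≤ y) : 1 ≤ log y / log x :=
  (one_le_div (log_pos hx)).2 (log_le_log (by linarith) hxy)

theorem log_div_log_le_log_div_log {a m r b : ℝ} (ha : 1 < a) (ham : a ≤ m) (hr : 1 ≤ r)
    (hrb : r ≤ b) : log r / log m ≤ log b / log a :=
  div_le_div₀ (log_nonneg (by linarith)) (log_le_log (by linarith) hrb) (log_pos ha)
    (log_le_log (by linarith) ham)

theorem gFun_eq_one_add_log_div_log {h : ℝ} (hh : 1 < h) :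
    gFun h = 1 + log √((h - 1) * (h + 3)) / log ((h - 1 + √((h - 1) * (h + 3))) / 2) := by
  have ha : h - 1 ≠ 0 := by linarith
  have hb : h + 3 ≠ 0 := by linarith
  have hs : h - 1 + √((h - 1) * (h + 3)) ≠ 0 := by positivity
  rw [gFun, fFun, log_sqrt (by positivity), log_div hs two_ne_zero, log_mul ha hb]
  simp only [logb]
  field_simp

theorem two_le_gFun {h : ℝ} (hh : 2 ≤ h) : 2 ≤ gFun h := by
  have har : h - 1 < √((h - 1) * (h + 3)) := lt_sqrt_mul_of_lt (by linarith) (by linarith)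
  rw [gFun_eq_one_add_log_div_log (by linarith)]
  linarith [one_le_log_div_log (x := (h - 1 + √((h - 1) * (h + 3))) / 2)
    (y := √((h - 1) * (h + 3))) (by linarith) (by linarith)]

theorem gFun_le_one_add_log_div_log {h : ℝ} (hh : 2 < h) :
    gFun h ≤ 1 + log (h + 3) / log (h - 1) := by
  have har : h - 1 < √((h - 1) * (h + 3)) := lt_sqrt_mul_of_lt (by linarith) (by linarith)
  have hrb : √((h - 1) * (h + 3)) < h + 3 := sqrt_mul_lt_of_lt (by linarith) (by linarith)
  rw [gFun_eq_one_add_log_div_log (by linarith)]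
  gcongr 1 + ?_
  exact log_div_log_le_log_div_log (by linarith) (by linarith) (by linarith) hrb.le

/-- `g(h) ≥ 2` for all real `h ≥ 2`, and `g(h) → 2` as
`h → ∞`. -/
theorem gFun_ge_two_and_limit :
    (∀ h : ℝ, 2 ≤ h → 2 ≤ gFun h) ∧
    Filter.Tendsto gFun Filter.atTop (nhds 2) := by
  refine ⟨fun h ↦ two_le_gFun, ?_⟩
  have hupper : Tendsto (fun h ↦ 1 + log (h + 3) / log (h - 1)) atTop (𝓝 2) := by
    simpa [sub_eq_add_neg, one_add_one_eq_two] using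
      (tendsto_log_add_div_log_add 3 (-1)).const_add 1
  refine tendsto_of_tendsto_of_tendsto_of_le_of_le' tendsto_const_nhds hupper ?_ ?_
  · filter_upwards [eventually_ge_atTop 2] with h hh using two_le_gFun hh
  · filter_upwards [eventually_gt_atTop 2] with h hh using gFun_le_one_add_log_div_log hh
end
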